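/- arXiv:2408.15352 — 6 statements merged into one kernel-verified Lean document; each statement's English description precedes it below -/
import Mathlib

section
/- Let A = (a_{rs}) be a dense alternating sign matrix of size n. Then for all indices 1 ≤ i ≤ j ≤ n and 1 ≤ k ≤ l ≤ n, the block sum S = Σ_{r=i}^{j} Σ_{s=k}^{l} a_{rs} satisfies S ≥ −1; moreover, S = −1 if and only if j − i and l − k are both even and the four corner entries satisfy a_{i,k} = a_{i,l} = a_{j,k} = a_{j,l} = −1. Equivalently, for the associated quasi-copula Q = Q(A), every rectangle volume V_Q(R) is at least −1, with equality exactly for rectangles whose block of entries has an odd number of rows and an odd number of columns and all four corner entries equal to −1. -/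
open Finset

/-- An `n×n` matrix encoded as `ℕ → ℕ → ℝ` with indices `1,…,n` and zero entries outside. -/
def IsASM (n : ℕ) (a : ℕ → ℕ → ℝ) : Prop :=
  (∀ i j, ¬(1 ≤ i ∧ i ≤ n ∧ 1 ≤ j ∧ j ≤ n) → a i j = 0) ∧
  (∀ i j, a i j = -1 ∨ a i j = 0 ∨ a i j = 1) ∧
  (∀ i, 1 ≤ i → i ≤ n → ∑ j ∈ Icc 1 n, a i j = 1) ∧
  (∀ j, 1 ≤ j → j ≤ n → ∑ i ∈ Icc 1 n, a i j = 1) ∧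
  (∀ i t, 1 ≤ i → i ≤ n → t ≤ n →
    (∑ j ∈ Icc 1 t, a i j = 0 ∨ ∑ j ∈ Icc 1 t, a i j = 1)) ∧
  (∀ j t, 1 ≤ j → j ≤ n → t ≤ n →
    (∑ i ∈ Icc 1 t, a i j = 0 ∨ ∑ i ∈ Icc 1 t, a i j = 1))

/-- No zero entry lies between two nonzero entries in any row or column. -/
def IsDense (a : ℕ → ℕ → ℝ) : Prop :=
  (∀ i j₁ j₂ j₃, j₁ < j₂ → j₂ < j₃ → a i j₁ ≠ 0 → a i j₃ ≠ 0 → a i j₂ ≠ 0) ∧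
  (∀ j i₁ i₂ i₃, i₁ < i₂ → i₂ < i₃ → a i₁ j ≠ 0 → a i₃ j ≠ 0 → a i₂ j ≠ 0)

/-- A proper ASM contains at least one entry `-1`. -/
def IsProper (a : ℕ → ℕ → ℝ) : Prop := ∃ i j, a i j = -1

/-- The matrix `F_n^k`. -/
noncomputable def Fmat (n k : ℕ) : ℕ → ℕ → ℝ := fun i j =>
  if k + 1 ≤ i + j ∧ (i : ℤ) + j ≤ 2 * n - k + 1 ∧ |(i : ℤ) - j| ≤ (k : ℤ) - 1
  then (-1 : ℝ) ^ (i + j - k - 1) else 0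

/-- The discrete quasi-copula associated with a matrix: `Q(A)(r,s) = Σ_{i≤r} Σ_{j≤s} a_{ij}`. -/
noncomputable def Qmat (a : ℕ → ℕ → ℝ) : ℕ → ℕ → ℝ := fun r s =>
  ∑ i ∈ Icc 1 r, ∑ j ∈ Icc 1 s, a i j

/-- Volume of the rectangle `[i,j]×[k,l]` with respect to `Q`. -/
def vol (Q : ℕ → ℕ → ℝ) (i j k l : ℕ) : ℝ := Q i k + Q j l - Q i l - Q j k

/-- `D_↘^Q(r,s) = min{0, V_Q([r,r']×[s,s']) : r < r' ≤ n, s < s' ≤ n}`. -/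
noncomputable def Dse (n : ℕ) (Q : ℕ → ℕ → ℝ) (r s : ℕ) : ℝ :=
  (Icc (r+1) n ×ˢ Icc (s+1) n).fold min 0 (fun p => vol Q r p.1 s p.2)

/-- `D_↙^Q(r,s) = min{0, V_Q([r,r']×[s',s]) : r < r' ≤ n, 0 ≤ s' < s}`. -/
noncomputable def Dsw (n : ℕ) (Q : ℕ → ℕ → ℝ) (r s : ℕ) : ℝ :=
  (Icc (r+1) n ×ˢ range s).fold min 0 (fun p => vol Q r p.1 p.2 s)

/-- `D_↖^Q(r,s) = min{0, V_Q([r',r]×[s',s]) : 0 ≤ r' < r, 0 ≤ s' < s}`. -/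
noncomputable def Dnw (n : ℕ) (Q : ℕ → ℕ → ℝ) (r s : ℕ) : ℝ :=
  (range r ×ˢ range s).fold min 0 (fun p => vol Q p.1 r p.2 s)

/-- `D_↗^Q(r,s) = min{0, V_Q([r',r]×[s,s']) : 0 ≤ r' < r, s < s' ≤ n}`. -/
noncomputable def Dne (n : ℕ) (Q : ℕ → ℕ → ℝ) (r s : ℕ) : ℝ :=
  (range r ×ˢ Icc (s+1) n).fold min 0 (fun p => vol Q p.1 r s p.2)

/-- The main defect `D_M^Q`. -/
noncomputable def DM (n : ℕ) (Q : ℕ → ℕ → ℝ) (r s : ℕ) : ℝ :=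
  min (Dse n Q r s) (Dnw n Q r s)

/-- The opposite defect `D_O^Q`. -/
noncomputable def DO (n : ℕ) (Q : ℕ → ℕ → ℝ) (r s : ℕ) : ℝ :=
  min (Dsw n Q r s) (Dne n Q r s)

/-- Boundary conditions for a function on `L_n × L_n`. -/
def DiscBoundary (n : ℕ) (P : ℕ → ℕ → ℝ) : Prop :=
  ∀ i, i ≤ n → P i 0 = 0 ∧ P 0 i = 0 ∧ P i n = i ∧ P n i = i

/-- `(P,Q)` is a discrete imprecise copula on `L_n × L_n`. -/
def DiscImpreciseCopula (n : ℕ) (P Q : ℕ → ℕ → ℝ) : Prop :=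
  DiscBoundary n P ∧ DiscBoundary n Q ∧
  ∀ i j k l, i ≤ j → j ≤ n → k ≤ l → l ≤ n →
    0 ≤ Q i k + P j l - P i l - P j k ∧
    0 ≤ P i k + Q j l - P i l - P j k ∧
    0 ≤ Q i k + Q j l - Q i l - P j k ∧
    0 ≤ Q i k + Q j l - P i l - Q j k

/-- `(P,Q)` is a self-dual discrete imprecise copula: `P_M = Q` and `Q_O = P` on `L_n × L_n`. -/
def SelfDual (n : ℕ) (P Q : ℕ → ℕ → ℝ) : Prop :=
  DiscImpreciseCopula n P Q ∧
  (∀ r, r ≤ n → ∀ s, s ≤ n → P r s - DM n P r s = Q r s) ∧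
  (∀ r, r ≤ n → ∀ s, s ≤ n → Q r s + DO n Q r s = P r s)

/-- A discrete quasi-copula (integer-range normalization) on `L_n × L_n`. -/
def DiscQuasiCopula (n : ℕ) (Q : ℕ → ℕ → ℝ) : Prop :=
  DiscBoundary n Q ∧
  (∀ i i' j, i ≤ i' → i' ≤ n → j ≤ n → Q i j ≤ Q i' j) ∧
  (∀ i j j', j ≤ j' → j' ≤ n → i ≤ n → Q i j ≤ Q i j') ∧
  (∀ i i' j j', i ≤ n → i' ≤ n → j ≤ n → j' ≤ n →
    |Q i j - Q i' j'| ≤ |(i : ℝ) - i'| + |(j : ℝ) - j'|)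

/-- A discrete copula: a discrete quasi-copula with all rectangle volumes nonnegative. -/
def DiscCopula (n : ℕ) (Q : ℕ → ℕ → ℝ) : Prop :=
  DiscQuasiCopula n Q ∧
  ∀ i j k l, i ≤ j → j ≤ n → k ≤ l → l ≤ n → 0 ≤ vol Q i j k l

/-- A permutation matrix encoded as `ℕ → ℕ → ℝ` with indices `1,…,n`. -/
def IsPermMatrix (n : ℕ) (p : ℕ → ℕ → ℝ) : Prop :=
  (∀ i j, ¬(1 ≤ i ∧ i ≤ n ∧ 1 ≤ j ∧ j ≤ n) → p i j = 0) ∧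
  (∀ i j, p i j = 0 ∨ p i j = 1) ∧
  (∀ i, 1 ≤ i → i ≤ n → ∑ j ∈ Icc 1 n, p i j = 1) ∧
  (∀ j, 1 ≤ j → j ≤ n → ∑ i ∈ Icc 1 n, p i j = 1)

lemma asm_swap {n : ℕ} {a : ℕ → ℕ → ℝ} (h : IsASM n a) : IsASM n (fun i j => a j i) := by
  obtain ⟨hz, hv, hr, hc, hrp, hcp⟩ := h
  exact ⟨fun i j hij => hz j i (by tauto), fun i j => hv j i, hc, hr, hcp, hrp⟩

lemma dense_swap {a : ℕ → ℕ → ℝ} (h : IsDense a) : IsDense (fun i j => a j i) :=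
  ⟨h.2, h.1⟩

lemma asm_range {n : ℕ} {a : ℕ → ℕ → ℝ} (hA : IsASM n a) {i j : ℕ} (h : a i j ≠ 0) :
    1 ≤ i ∧ i ≤ n ∧ 1 ≤ j ∧ j ≤ n := by
  by_contra hc; exact h (hA.1 i j hc)

lemma sum_split (f : ℕ → ℝ) {k l : ℕ} (hk : 1 ≤ k) (hkl : k ≤ l) :
    ∑ s ∈ Icc 1 l, f s = (∑ s ∈ Icc 1 (k-1), f s) + ∑ s ∈ Icc k l, f s := by
  have h1 : Icc 1 l = Ioc 0 l := by rw [← Finset.Icc_add_one_left_eq_Ioc]; rfl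
  have h2 : Icc 1 (k-1) = Ioc 0 (k-1) := by rw [← Finset.Icc_add_one_left_eq_Ioc]; rfl
  have h3 : Icc k l = Ioc (k-1) l := by rw [← Finset.Icc_add_one_left_eq_Ioc]; congr 1; omega
  rw [h1, h2, h3, Finset.sum_Ioc_consecutive f (by omega) (by omega)]

/-- adjacent nonzero entries in a row alternate in sign -/
lemma alt_adjacent {n : ℕ} {a : ℕ → ℕ → ℝ} (hA : IsASM n a)
    {r s : ℕ} (hr : 1 ≤ r) (hrn : r ≤ n) (hs : 1 ≤ s) (hsn : s + 1 ≤ n)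
    (h1 : a r s ≠ 0) (h2 : a r (s+1) ≠ 0) : a r (s+1) = - a r s := by
  obtain ⟨hz, hv, hrow, hcol, hrp, hcp⟩ := hA
  have e1 : ∑ t ∈ Icc 1 s, a r t = (∑ t ∈ Icc 1 (s-1), a r t) + a r s := by
    have := sum_split (f := fun t => a r t) (k := s) (l := s) hs le_rfl
    simpa using this
  have e2 : ∑ t ∈ Icc 1 (s+1), a r t = (∑ t ∈ Icc 1 s, a r t) + a r (s+1) := by
    have := sum_split (f := fun t => a r t) (k := s+1) (l := s+1) (by omega) le_rfl
    simpa using this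
  have p0 := hrp r (s-1) hr hrn (by omega)
  have p1 := hrp r s hr hrn (by omega)
  have p2 := hrp r (s+1) hr hrn hsn
  rcases hv r s with h | h | h <;> rcases hv r (s+1) with h' | h' | h'
  · exfalso
    rcases p0 with q|q <;> rcases p1 with q1|q1 <;> rcases p2 with q2|q2 <;>
      rw [e1, h] at q1 <;> rw [e2, h'] at q2 <;> linarith
  · exact absurd h' h2
  · simp [h, h']
  · exact absurd h h1
  · exact absurd h h1
  · exact absurd h h1
  · simp [h, h']
  · exact absurd h' h2
  · exfalso
    rcases p0 with q|q <;> rcases p1 with q1|q1 <;> rcases p2 with q2|q2 <;>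
      rw [e1, h] at q1 <;> rw [e2, h'] at q2 <;> linarith

/-- slice of a row between two nonzero entries: all nonzero, alternating -/
lemma asm_slice {n : ℕ} {a : ℕ → ℕ → ℝ} (hA : IsASM n a) (hd : IsDense a)
    {r k l : ℕ} (hr : 1 ≤ r) (hrn : r ≤ n) (hk : 1 ≤ k) (hkl : k ≤ l) (hl : l ≤ n)
    (h1 : a r k ≠ 0) (h2 : a r l ≠ 0) :
    (∑ s ∈ Icc k l, a r s) = (a r k + a r l) / 2 ∧ a r l = (-1)^(l-k) * a r k := by
  induction l, hkl using Nat.le_induction with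
  | base => exact ⟨by rw [Icc_self, sum_singleton]; ring, by simp⟩
  | succ l hkl ih =>
    have hml : a r l ≠ 0 := by
      rcases eq_or_lt_of_le hkl with h | h
      · rwa [← h]
      · exact hd.1 r k l (l+1) h (by omega) h1 h2
    obtain ⟨e, p⟩ := ih (by omega) hml
    have halt : a r (l+1) = - a r l := alt_adjacent hA hr hrn (by omega) hl hml h2
    constructor
    · rw [Finset.sum_Icc_succ_top (by omega), e, halt]; ring
    · rw [halt, p]
      have hrw : l + 1 - k = (l - k) + 1 := by omega
      rw [hrw, pow_succ]; ring

lemma asm_diff {a : ℕ → ℕ → ℝ} {r k l : ℕ} (hk : 1 ≤ k) (hkl : k ≤ l) :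
    ∑ s ∈ Icc k l, a r s = (∑ s ∈ Icc 1 l, a r s) - ∑ s ∈ Icc 1 (k-1), a r s := by
  rw [sum_split (a r) hk hkl]; ring

/-- a block row sum is -1, 0 or 1 -/
lemma rowsum_mem {n : ℕ} {a : ℕ → ℕ → ℝ} (hA : IsASM n a)
    {r k l : ℕ} (hr : 1 ≤ r) (hrn : r ≤ n) (hk : 1 ≤ k) (hkl : k ≤ l) (hl : l ≤ n) :
    (∑ s ∈ Icc k l, a r s) = -1 ∨ (∑ s ∈ Icc k l, a r s) = 0 ∨ (∑ s ∈ Icc k l, a r s) = 1 := by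
  have e := asm_diff (a := a) (r := r) hk hkl
  have p1 := hA.2.2.2.2.1 r (k-1) hr hrn (by omega)
  have p2 := hA.2.2.2.2.1 r l hr hrn hl
  rcases p1 with q|q <;> rcases p2 with q'|q' <;> rw [e, q, q'] <;> norm_num

/-- if the block row sum is -1 then the end entries are -1 and the length is odd -/
lemma rowsum_neg {n : ℕ} {a : ℕ → ℕ → ℝ} (hA : IsASM n a) (hd : IsDense a)
    {r k l : ℕ} (hr : 1 ≤ r) (hrn : r ≤ n) (hk : 1 ≤ k) (hkl : k ≤ l) (hl : l ≤ n)
    (hS : (∑ s ∈ Icc k l, a r s) = -1) :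
    a r k = -1 ∧ a r l = -1 ∧ Even (l - k) := by
  have e := asm_diff (a := a) (r := r) hk hkl
  have p1 := hA.2.2.2.2.1 r (k-1) hr hrn (by omega)
  have p2 := hA.2.2.2.2.1 r l hr hrn hl
  have hk1 : ∑ s ∈ Icc 1 (k-1), a r s = 1 := by
    rcases p1 with q|q
    · exfalso; rw [e, q] at hS; rcases p2 with q'|q' <;> rw [q'] at hS <;> norm_num at hS
    · exact q
  have hl0 : ∑ s ∈ Icc 1 l, a r s = 0 := by
    rw [e, hk1] at hS; linarith
  obtain ⟨s1, hs1m, hs1⟩ : ∃ s1 ∈ Icc 1 (k-1), a r s1 ≠ 0 := by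
    apply Finset.exists_ne_zero_of_sum_ne_zero; rw [hk1]; norm_num
  have hrow : ∑ s ∈ Icc 1 n, a r s = 1 := hA.2.2.1 r hr hrn
  have hln : l < n := by
    by_contra hc
    have : l = n := by omega
    rw [this, hrow] at hl0; norm_num at hl0
  obtain ⟨s2, hs2m, hs2⟩ : ∃ s2 ∈ Icc (l+1) n, a r s2 ≠ 0 := by
    apply Finset.exists_ne_zero_of_sum_ne_zero
    rw [asm_diff (a := a) (r := r) (by omega : 1 ≤ l+1) (by omega : l+1 ≤ n)]
    simp only [Nat.add_sub_cancel]
    rw [hrow, hl0]; norm_num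
  simp only [mem_Icc] at hs1m hs2m
  have hak : a r k ≠ 0 := hd.1 r s1 k s2 (by omega) (by omega) hs1 hs2
  have hal : a r l ≠ 0 := hd.1 r s1 l s2 (by omega) (by omega) hs1 hs2
  obtain ⟨eS, pS⟩ := asm_slice hA hd hr hrn hk hkl hl hak hal
  rcases hA.2.1 r k with hvk|hvk|hvk <;> rcases hA.2.1 r l with hvl|hvl|hvl <;>
    first
    | (exact absurd hvk hak) | (exact absurd hvl hal)
    | (exfalso; rw [eS, hvk, hvl] at hS; norm_num at hS; done)
    | skip
  refine ⟨hvk, hvl, ?_⟩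
  rw [hvl, hvk] at pS
  have : (-1 : ℝ) ^ (l - k) = 1 := by linarith
  exact (neg_one_pow_eq_one_iff_even (by norm_num)).1 this

/-- a `-1` entry has `+1` neighbours among its row -/
lemma asm_corner {n : ℕ} {a : ℕ → ℕ → ℝ} (hA : IsASM n a) (hd : IsDense a)
    {r k : ℕ} (h : a r k = -1) :
    2 ≤ k ∧ a r (k-1) = 1 ∧ k + 1 ≤ n ∧ a r (k+1) = 1 := by
  have hne : a r k ≠ 0 := by rw [h]; norm_num
  obtain ⟨hr, hrn, hk, hkn⟩ := asm_range hA hne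
  have p0 := hA.2.2.2.2.1 r (k-1) hr hrn (by omega)
  have p1 := hA.2.2.2.2.1 r k hr hrn hkn
  have e := asm_diff (a := a) (r := r) hk (le_refl k)
  rw [Icc_self, sum_singleton, h] at e
  have hk1 : ∑ s ∈ Icc 1 (k-1), a r s = 1 := by
    rcases p0 with q|q
    · exfalso; rw [q] at e; rcases p1 with q'|q' <;> rw [q'] at e <;> norm_num at e
    · exact q
  have hk0 : ∑ s ∈ Icc 1 k, a r s = 0 := by linarith
  obtain ⟨s1, hs1m, hs1⟩ : ∃ s1 ∈ Icc 1 (k-1), a r s1 ≠ 0 := by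
    apply Finset.exists_ne_zero_of_sum_ne_zero; rw [hk1]; norm_num
  simp only [mem_Icc] at hs1m
  have hk2 : 2 ≤ k := by omega
  have hrow : ∑ s ∈ Icc 1 n, a r s = 1 := hA.2.2.1 r hr hrn
  have hkn' : k < n := by
    by_contra hc
    have : k = n := by omega
    rw [this, hrow] at hk0; norm_num at hk0
  obtain ⟨s2, hs2m, hs2⟩ : ∃ s2 ∈ Icc (k+1) n, a r s2 ≠ 0 := by
    apply Finset.exists_ne_zero_of_sum_ne_zero
    rw [asm_diff (a := a) (r := r) (by omega : 1 ≤ k+1) (by omega : k+1 ≤ n)]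
    simp only [Nat.add_sub_cancel]
    rw [hrow, hk0]; norm_num
  simp only [mem_Icc] at hs2m
  -- the neighbours are nonzero
  have hm : a r (k-1) ≠ 0 := by
    rcases eq_or_lt_of_le hs1m.2 with hq | hq
    · rwa [hq] at hs1
    · exact hd.1 r s1 (k-1) k hq (by omega) hs1 hne
  have hp : a r (k+1) ≠ 0 := by
    rcases eq_or_lt_of_le hs2m.1 with hq | hq
    · rwa [← hq] at hs2
    · exact hd.1 r k (k+1) s2 (by omega) hq hne hs2
  have am : a r k = - a r (k-1) := by
    have := alt_adjacent hA hr hrn (s := k-1) (by omega) (by omega) hm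
    have hrw : k - 1 + 1 = k := by omega
    rw [hrw] at this; exact this hne
  have ap : a r (k+1) = - a r k := alt_adjacent hA hr hrn hk (by omega) hne hp
  refine ⟨hk2, by rw [h] at am; linarith, by omega, by rw [ap, h]; norm_num⟩

/-- For a dense ASM `A` of size `n`, every block sum
`S = Σ_{r=i}^{j} Σ_{s=k}^{l} a_{rs}` (with `1 ≤ i ≤ j ≤ n`, `1 ≤ k ≤ l ≤ n`) satisfies
`S ≥ −1`, with `S = −1` iff `j−i` and `l−k` are both even and the four corner entries
equal `−1`. -/
theorem dense_ASM_blockSum_ge_negOne (n : ℕ) (a : ℕ → ℕ → ℝ)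
    (hA : IsASM n a) (hdense : IsDense a)
    (i j k l : ℕ) (hi : 1 ≤ i) (hij : i ≤ j) (hj : j ≤ n)
    (hk : 1 ≤ k) (hkl : k ≤ l) (hl : l ≤ n) :
    -1 ≤ ∑ r ∈ Icc i j, ∑ s ∈ Icc k l, a r s ∧
      ((∑ r ∈ Icc i j, ∑ s ∈ Icc k l, a r s) = -1 ↔
        (Even (j - i) ∧ Even (l - k) ∧
          a i k = -1 ∧ a i l = -1 ∧ a j k = -1 ∧ a j l = -1)) := by
  classical
  have hA' : IsASM n (fun i j => a j i) := asm_swap hA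
  have hd' : IsDense (fun i j => a j i) := dense_swap hdense
  set w : ℕ → ℝ := fun r => ∑ s ∈ Icc k l, a r s with hw
  -- column versions of the helper lemmas
  have col_corner : ∀ r s : ℕ, a r s = -1 →
      2 ≤ r ∧ a (r-1) s = 1 ∧ r + 1 ≤ n ∧ a (r+1) s = 1 := by
    intro r s h
    exact asm_corner hA' hd' (r := s) (k := r) h
  have col_slice : ∀ i' j' s : ℕ, 1 ≤ s → s ≤ n → 1 ≤ i' → i' ≤ j' → j' ≤ n →
      a i' s ≠ 0 → a j' s ≠ 0 →
      (∑ r ∈ Icc i' j', a r s) = (a i' s + a j' s) / 2 ∧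
        a j' s = (-1)^(j'-i') * a i' s := by
    intro i' j' s hs hsn hi' hij' hj' h1 h2
    exact asm_slice hA' hd' (r := s) (k := i') (l := j') hs hsn hi' hij' hj' h1 h2
  set N : Finset ℕ := (Icc i j).filter (fun r => w r = -1) with hN
  set Pp : Finset ℕ := (Icc i j).filter (fun r => w r = 1) with hPp
  -- rows with block sum -1 have -1 at both column ends
  have hNprop : ∀ r ∈ N, a r k = -1 ∧ a r l = -1 ∧ Even (l - k) := by
    intro r hr
    rw [hN, mem_filter, mem_Icc] at hr
    exact rowsum_neg hA hdense (by omega) (by omega) hk hkl hl hr.2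
  -- claim: the predecessor / successor of a row in N (inside [i,j]) lies in Pp
  have claimL : ∀ r ∈ N, i < r → (r-1) ∈ Pp := by
    intro r hrN hir
    have hrIcc := hrN
    rw [hN, mem_filter, mem_Icc] at hrIcc
    obtain ⟨hak, hal, _⟩ := hNprop r hrN
    obtain ⟨_, hk1, _, _⟩ := col_corner r k hak
    obtain ⟨_, hl1, _, _⟩ := col_corner r l hal
    have hwp : w (r-1) = 1 := by
      have := (asm_slice hA hdense (r := r-1) (k := k) (l := l)
        (by omega) (by omega) hk hkl hl (by rw [hk1]; norm_num)
        (by rw [hl1]; norm_num)).1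
      show (∑ s ∈ Icc k l, a (r-1) s) = 1
      rw [this, hk1, hl1]; norm_num
    rw [hPp, mem_filter, mem_Icc]
    exact ⟨⟨by omega, by omega⟩, hwp⟩
  have claimR : ∀ r ∈ N, r < j → (r+1) ∈ Pp := by
    intro r hrN hrj
    have hrIcc := hrN
    rw [hN, mem_filter, mem_Icc] at hrIcc
    obtain ⟨hak, hal, _⟩ := hNprop r hrN
    obtain ⟨_, _, _, hk1⟩ := col_corner r k hak
    obtain ⟨_, _, _, hl1⟩ := col_corner r l hal
    have hwp : w (r+1) = 1 := by
      have := (asm_slice hA hdense (r := r+1) (k := k) (l := l)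
        (by omega) (by omega) hk hkl hl (by rw [hk1]; norm_num)
        (by rw [hl1]; norm_num)).1
      show (∑ s ∈ Icc k l, a (r+1) s) = 1
      rw [this, hk1, hl1]; norm_num
    rw [hPp, mem_filter, mem_Icc]
    exact ⟨⟨by omega, by omega⟩, hwp⟩
  -- counting
  have hcard1 : (N.erase i).card ≤ Pp.card := by
    apply Finset.card_le_card_of_injOn (fun r => r - 1)
    · intro r hr
      rw [mem_coe, mem_erase] at hr
      have : i ≤ r := by
        have := hr.2; rw [hN, mem_filter, mem_Icc] at this; omega
      exact claimL r hr.2 (by omega)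
    · intro r hr r' hr' hrr
      rw [mem_coe, mem_erase] at hr hr'
      have h1 : i ≤ r := by
        have := hr.2; rw [hN, mem_filter, mem_Icc] at this; omega
      have h2 : i ≤ r' := by
        have := hr'.2; rw [hN, mem_filter, mem_Icc] at this; omega
      simp only at hrr; omega
  have hcard2 : (N.erase j).card ≤ Pp.card := by
    apply Finset.card_le_card_of_injOn (fun r => r + 1)
    · intro r hr
      rw [mem_coe, mem_erase] at hr
      have : r ≤ j := by
        have := hr.2; rw [hN, mem_filter, mem_Icc] at this; omega
      exact claimR r hr.2 (by omega)
    · intro r hr r' hr' hrr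
      simp only at hrr; omega
  have hNle : N.card ≤ (N.erase i).card + 1 := by
    calc N.card ≤ (insert i (N.erase i)).card := card_le_card (fun x hx => by
            rcases eq_or_ne x i with h|h
            · exact h ▸ mem_insert_self _ _
            · exact mem_insert_of_mem (mem_erase.2 ⟨h, hx⟩))
      _ ≤ (N.erase i).card + 1 := card_insert_le _ _
  -- the sum equals #Pp - #N
  have hwvals : ∀ r ∈ Icc i j, w r = -1 ∨ w r = 0 ∨ w r = 1 := by
    intro r hr
    rw [mem_Icc] at hr
    exact rowsum_mem hA (by omega) (by omega) hk hkl hl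
  have hS : ∑ r ∈ Icc i j, w r = (Pp.card : ℝ) - N.card := by
    rw [← Finset.sum_filter_add_sum_filter_not (Icc i j) (fun r => w r = 1) w]
    have e1 : ∑ r ∈ Pp, w r = (Pp.card : ℝ) := by
      rw [Finset.sum_congr rfl (fun r hr => (mem_filter.1 hr).2), Finset.sum_const,
        nsmul_eq_mul, mul_one]
    set B := (Icc i j).filter (fun r => ¬ w r = 1) with hB
    have e2 : ∑ r ∈ B, w r = -(N.card : ℝ) := by
      rw [← Finset.sum_filter_add_sum_filter_not B (fun r => w r = -1) w]
      have eB1 : B.filter (fun r => w r = -1) = N := by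
        rw [hB, Finset.filter_filter, hN]
        apply Finset.filter_congr
        intro r _
        constructor
        · rintro ⟨_, h⟩; exact h
        · intro h; exact ⟨by rw [h]; norm_num, h⟩
      have eB2 : ∑ r ∈ B.filter (fun r => ¬ w r = -1), w r = 0 := by
        apply Finset.sum_eq_zero
        intro r hr
        rw [Finset.mem_filter, hB, Finset.mem_filter] at hr
        rcases hwvals r hr.1.1 with h|h|h
        · exact absurd h hr.2
        · exact h
        · exact absurd h hr.1.2
      rw [eB1, eB2, Finset.sum_congr rfl (fun r hr => (mem_filter.1 hr).2),
        Finset.sum_const, nsmul_eq_mul, mul_neg_one]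
      ring
    rw [e1, e2]; ring
  have hmain : -1 ≤ ∑ r ∈ Icc i j, w r := by
    rw [hS]
    have : (N.card : ℝ) ≤ (Pp.card : ℝ) + 1 := by
      have : N.card ≤ Pp.card + 1 := le_trans hNle (by omega)
      exact_mod_cast this
    linarith
  refine ⟨hmain, ?_, ?_⟩
  · -- forward direction
    intro hSm1
    rw [hS] at hSm1
    have hNcard : N.card = Pp.card + 1 := by
      have h1 : (N.card : ℝ) = (Pp.card : ℝ) + 1 := by linarith
      exact_mod_cast h1
    have hiN : i ∈ N := by
      by_contra hc
      rw [Finset.erase_eq_of_notMem hc] at hcard1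
      omega
    have hjN : j ∈ N := by
      by_contra hc
      rw [Finset.erase_eq_of_notMem hc] at hcard2
      omega
    obtain ⟨c1, c2, hev2⟩ := hNprop i hiN
    obtain ⟨c3, c4, _⟩ := hNprop j hjN
    have hpar := (col_slice i j k hk (by omega) hi hij hj
      (by rw [c1]; norm_num) (by rw [c3]; norm_num)).2
    rw [c1, c3] at hpar
    have hpow : (-1 : ℝ) ^ (j - i) = 1 := by linarith
    exact ⟨(neg_one_pow_eq_one_iff_even (by norm_num)).1 hpow, hev2, c1, c2, c3, c4⟩
  · -- backward direction
    rintro ⟨hev1, hev2, c1, c2, c3, c4⟩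
    have hc1 : a i k ≠ 0 := by rw [c1]; norm_num
    have hc2 : a i l ≠ 0 := by rw [c2]; norm_num
    have hc3 : a j k ≠ 0 := by rw [c3]; norm_num
    have hc4 : a j l ≠ 0 := by rw [c4]; norm_num
    have hallk : ∀ r ∈ Icc i j, a r k ≠ 0 := by
      intro r hr; rw [mem_Icc] at hr
      rcases eq_or_lt_of_le hr.1 with h|h
      · rwa [← h]
      rcases eq_or_lt_of_le hr.2 with h'|h'
      · rwa [h']
      exact hdense.2 k i r j h h' hc1 hc3
    have halll : ∀ r ∈ Icc i j, a r l ≠ 0 := by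
      intro r hr; rw [mem_Icc] at hr
      rcases eq_or_lt_of_le hr.1 with h|h
      · rwa [← h]
      rcases eq_or_lt_of_le hr.2 with h'|h'
      · rwa [h']
      exact hdense.2 l i r j h h' hc2 hc4
    have hweq : ∀ r ∈ Icc i j, w r = (a r k + a r l) / 2 := by
      intro r hr
      have hrm := hr; rw [mem_Icc] at hrm
      exact (asm_slice hA hdense (by omega) (by omega) hk hkl hl
        (hallk r hr) (halll r hr)).1
    rw [Finset.sum_congr rfl hweq]
    have ek := (col_slice i j k hk (by omega) hi hij hj hc1 hc3).1
    have el := (col_slice i j l (by omega) hl hi hij hj hc2 hc4).1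
    have : ∑ r ∈ Icc i j, (a r k + a r l) / 2
        = (∑ r ∈ Icc i j, a r k + ∑ r ∈ Icc i j, a r l) / 2 := by
      rw [← Finset.sum_add_distrib, ← Finset.sum_div]
    rw [this, ek, el, c1, c2, c3, c4]
    norm_num
end

section
/- Let A = (a_{ij}) be a proper dense alternating sign matrix of size n and let Q = Q(A) be the associated discrete quasi-copula. Then every entry of each of the four directional defect matrices D_↘^Q, D_↙^Q, D_↖^Q, D_↗^Q is equal to 0 or −1, and for all (r,s) ∈ L_n × L_n (reading a_{ij} = 0 whenever i or j lies outside {1,…,n}): (a) D_↘^Q(r,s) = −1 if and only if a_{r+1,s+1} = −1; (b) D_↙^Q(r,s) = −1 if and only if a_{r+1,s} = −1; (c) D_↖^Q(r,s) = −1 if and only if a_{r,s} = −1; (d) D_↗^Q(r,s) = −1 if and only if a_{r,s+1} = −1. -/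
open Finset

namespace ASMaux
variable {n : ℕ} {a : ℕ → ℕ → ℝ}

lemma Icc_one (u : ℕ) : Icc 1 u = Ioc 0 u := by
  ext x; simp [Finset.mem_Icc, Finset.mem_Ioc]; omega

lemma sum_split (f : ℕ → ℝ) {t u : ℕ} (h : t ≤ u) :
    ∑ j ∈ Icc 1 u, f j = ∑ j ∈ Icc 1 t, f j + ∑ j ∈ Icc (t+1) u, f j := by
  rw [Icc_one, Icc_one, Finset.Icc_add_one_left_eq_Ioc]
  exact (Finset.sum_Ioc_consecutive f (Nat.zero_le t) h).symm

lemma bounds_of_ne (hA : IsASM n a) {i j : ℕ} (h : a i j ≠ 0) :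
    1 ≤ i ∧ i ≤ n ∧ 1 ≤ j ∧ j ≤ n := by
  by_contra hc
  exact h (hA.1 i j hc)

/-- neg_row: a negative row-segment sum forces `-1` entries at both ends. -/
lemma neg_row (hA : IsASM n a) (hdense : IsDense a) {i j1 j2 : ℕ}
    (hi1 : 1 ≤ i) (hi2 : i ≤ n) (hj1 : 1 ≤ j1) (hjj : j1 ≤ j2) (hj2 : j2 ≤ n)
    (hc : ∑ j ∈ Icc j1 j2, a i j < 0) :
    a i j1 = -1 ∧ a i j2 = -1 ∧ ∑ j ∈ Icc j1 j2, a i j = -1 := by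
  obtain ⟨j0, rfl⟩ : ∃ j0, j1 = j0 + 1 := ⟨j1 - 1, by omega⟩
  have hkey : ∑ j ∈ Icc 1 j2, a i j
      = ∑ j ∈ Icc 1 j0, a i j + ∑ j ∈ Icc (j0+1) j2, a i j := sum_split _ (by omega)
  have h0 : ∑ j ∈ Icc 1 j0, a i j = 0 ∨ ∑ j ∈ Icc 1 j0, a i j = 1 :=
    hA.2.2.2.2.1 i j0 hi1 hi2 (by omega)
  have h2' : ∑ j ∈ Icc 1 j2, a i j = 0 ∨ ∑ j ∈ Icc 1 j2, a i j = 1 :=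
    hA.2.2.2.2.1 i j2 hi1 hi2 hj2
  have hs0 : ∑ j ∈ Icc 1 j0, a i j = 1 := by rcases h0 with h|h <;> rcases h2' with h'|h' <;> linarith
  have hs2 : ∑ j ∈ Icc 1 j2, a i j = 0 := by rcases h2' with h'|h' <;> linarith
  have hval : ∑ j ∈ Icc (j0+1) j2, a i j = -1 := by linarith
  -- nonzero entry on left
  obtain ⟨j', hj'mem, hj'⟩ : ∃ j' ∈ Icc 1 j0, a i j' ≠ 0 :=
    Finset.exists_ne_zero_of_sum_ne_zero (by rw [hs0]; norm_num)
  -- nonzero entry on right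
  have htail : ∑ j ∈ Ioc j2 n, a i j = 1 := by
    have h := sum_split (fun j => a i j) hj2
    rw [Finset.Icc_add_one_left_eq_Ioc j2 n] at h
    have hrow := hA.2.2.1 i hi1 hi2
    linarith
  obtain ⟨j'', hj''mem, hj''⟩ : ∃ j'' ∈ Ioc j2 n, a i j'' ≠ 0 :=
    Finset.exists_ne_zero_of_sum_ne_zero (by rw [htail]; norm_num)
  simp only [Finset.mem_Icc, Finset.mem_Ioc] at hj'mem hj''mem
  have hne1 : a i (j0+1) ≠ 0 :=
    hdense.1 i j' (j0+1) j'' (by omega) (by omega) hj' hj''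
  have hne2 : a i j2 ≠ 0 :=
    hdense.1 i j' j2 j'' (by omega) (by omega) hj' hj''
  have e1 : ∑ j ∈ Icc 1 (j0+1), a i j = ∑ j ∈ Icc 1 j0, a i j + a i (j0+1) :=
    Finset.sum_Icc_succ_top (by omega) _
  have hv1 : ∑ j ∈ Icc 1 (j0+1), a i j = 0 ∨ ∑ j ∈ Icc 1 (j0+1), a i j = 1 :=
    hA.2.2.2.2.1 i (j0+1) hi1 hi2 (by omega)
  have ha1 : a i (j0+1) = -1 := by
    rcases hv1 with h|h
    · linarith
    · exfalso; apply hne1; linarith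
  obtain ⟨j3, rfl⟩ : ∃ j3, j2 = j3 + 1 := ⟨j2 - 1, by omega⟩
  have e2 : ∑ j ∈ Icc 1 (j3+1), a i j = ∑ j ∈ Icc 1 j3, a i j + a i (j3+1) :=
    Finset.sum_Icc_succ_top (by omega) _
  have hv2 : ∑ j ∈ Icc 1 j3, a i j = 0 ∨ ∑ j ∈ Icc 1 j3, a i j = 1 :=
    hA.2.2.2.2.1 i j3 hi1 hi2 (by omega)
  have ha2 : a i (j3+1) = -1 := by
    rcases hv2 with h|h
    · exfalso; apply hne2; linarith
    · linarith
  exact ⟨ha1, ha2, hval⟩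


/-- Below a `-1` in a column there is a `+1` immediately after. -/
lemma col_succ (hA : IsASM n a) (hdense : IsDense a) {i j : ℕ}
    (hi1 : 1 ≤ i) (hi2 : i ≤ n) (hj1 : 1 ≤ j) (hj2 : j ≤ n) (ha : a i j = -1) :
    i + 1 ≤ n ∧ a (i+1) j = 1 := by
  obtain ⟨i0, rfl⟩ : ∃ i0, i = i0 + 1 := ⟨i - 1, by omega⟩
  have e1 : ∑ i' ∈ Icc 1 (i0+1), a i' j = ∑ i' ∈ Icc 1 i0, a i' j + a (i0+1) j :=
    Finset.sum_Icc_succ_top (by omega) _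
  have h0 : ∑ i' ∈ Icc 1 i0, a i' j = 0 ∨ ∑ i' ∈ Icc 1 i0, a i' j = 1 :=
    hA.2.2.2.2.2 j i0 hj1 hj2 (by omega)
  have h1 : ∑ i' ∈ Icc 1 (i0+1), a i' j = 0 ∨ ∑ i' ∈ Icc 1 (i0+1), a i' j = 1 :=
    hA.2.2.2.2.2 j (i0+1) hj1 hj2 hi2
  have hS1 : ∑ i' ∈ Icc 1 (i0+1), a i' j = 0 := by
    rcases h0 with h|h <;> rcases h1 with h'|h' <;> linarith
  have hS0 : ∑ i' ∈ Icc 1 i0, a i' j = 1 := by linarith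
  obtain ⟨i', hi'mem, hi'⟩ : ∃ i' ∈ Icc 1 i0, a i' j ≠ 0 :=
    Finset.exists_ne_zero_of_sum_ne_zero (by rw [hS0]; norm_num)
  have htail : ∑ i' ∈ Ioc (i0+1) n, a i' j = 1 := by
    have h := sum_split (fun i' => a i' j) hi2
    rw [Finset.Icc_add_one_left_eq_Ioc (i0+1) n] at h
    have hcol := hA.2.2.2.1 j hj1 hj2
    linarith
  obtain ⟨i'', hi''mem, hi''⟩ : ∃ i'' ∈ Ioc (i0+1) n, a i'' j ≠ 0 :=
    Finset.exists_ne_zero_of_sum_ne_zero (by rw [htail]; norm_num)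
  simp only [Finset.mem_Icc, Finset.mem_Ioc] at hi'mem hi''mem
  have hnn : i0 + 2 ≤ n := by omega
  refine ⟨hnn, ?_⟩
  have hne : a (i0+2) j ≠ 0 := by
    rcases eq_or_lt_of_le (show i0 + 2 ≤ i'' by omega) with h|h
    · rw [h]; exact hi''
    · exact hdense.2 j i' (i0+2) i'' (by omega) h hi' hi''
  have e2 : ∑ i' ∈ Icc 1 (i0+2), a i' j = ∑ i' ∈ Icc 1 (i0+1), a i' j + a (i0+2) j :=
    Finset.sum_Icc_succ_top (by omega) _
  have h2 : ∑ i' ∈ Icc 1 (i0+2), a i' j = 0 ∨ ∑ i' ∈ Icc 1 (i0+2), a i' j = 1 :=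
    hA.2.2.2.2.2 j (i0+2) hj1 hj2 hnn
  rcases h2 with h|h
  · exfalso; apply hne; linarith
  · linarith

/-- Above a `-1` in a column there is a `+1` immediately before. -/
lemma col_pred (hA : IsASM n a) (hdense : IsDense a) {i j : ℕ}
    (hin : i + 1 ≤ n) (hj1 : 1 ≤ j) (hj2 : j ≤ n) (ha : a (i+1) j = -1) :
    1 ≤ i ∧ a i j = 1 := by
  have e1 : ∑ i' ∈ Icc 1 (i+1), a i' j = ∑ i' ∈ Icc 1 i, a i' j + a (i+1) j :=
    Finset.sum_Icc_succ_top (by omega) _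
  have h0 : ∑ i' ∈ Icc 1 i, a i' j = 0 ∨ ∑ i' ∈ Icc 1 i, a i' j = 1 :=
    hA.2.2.2.2.2 j i hj1 hj2 (by omega)
  have h1 : ∑ i' ∈ Icc 1 (i+1), a i' j = 0 ∨ ∑ i' ∈ Icc 1 (i+1), a i' j = 1 :=
    hA.2.2.2.2.2 j (i+1) hj1 hj2 hin
  have hS0 : ∑ i' ∈ Icc 1 i, a i' j = 1 := by
    rcases h0 with h|h <;> rcases h1 with h'|h' <;> linarith
  have hS1 : ∑ i' ∈ Icc 1 (i+1), a i' j = 0 := by linarith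
  obtain ⟨i', hi'mem, hi'⟩ : ∃ i' ∈ Icc 1 i, a i' j ≠ 0 :=
    Finset.exists_ne_zero_of_sum_ne_zero (by rw [hS0]; norm_num)
  have htail : ∑ i' ∈ Ioc (i+1) n, a i' j = 1 := by
    have h := sum_split (fun i' => a i' j) hin
    rw [Finset.Icc_add_one_left_eq_Ioc (i+1) n] at h
    have hcol := hA.2.2.2.1 j hj1 hj2
    linarith
  obtain ⟨i'', hi''mem, hi''⟩ : ∃ i'' ∈ Ioc (i+1) n, a i'' j ≠ 0 :=
    Finset.exists_ne_zero_of_sum_ne_zero (by rw [htail]; norm_num)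
  simp only [Finset.mem_Icc, Finset.mem_Ioc] at hi'mem hi''mem
  have hi1 : 1 ≤ i := by omega
  refine ⟨hi1, ?_⟩
  have hne : a i j ≠ 0 := by
    rcases eq_or_lt_of_le hi'mem.2 with h|h
    · rw [← h]; exact hi'
    · exact hdense.2 j i' i i'' h (by omega) hi' hi''
  obtain ⟨i0, rfl⟩ : ∃ i0, i = i0 + 1 := ⟨i - 1, by omega⟩
  have e2 : ∑ i' ∈ Icc 1 (i0+1), a i' j = ∑ i' ∈ Icc 1 i0, a i' j + a (i0+1) j :=
    Finset.sum_Icc_succ_top (by omega) _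
  have h2 : ∑ i' ∈ Icc 1 i0, a i' j = 0 ∨ ∑ i' ∈ Icc 1 i0, a i' j = 1 :=
    hA.2.2.2.2.2 j i0 hj1 hj2 (by omega)
  rcases h2 with h|h
  · linarith
  · exfalso; apply hne; linarith

/-- `+1` entries at both ends of a row segment give segment sum `1`. -/
lemma row_sum_one (hA : IsASM n a) {i j1 j2 : ℕ}
    (hi1 : 1 ≤ i) (hi2 : i ≤ n) (hj1 : 1 ≤ j1) (hjj : j1 ≤ j2) (hj2 : j2 ≤ n)
    (h1 : a i j1 = 1) (h2 : a i j2 = 1) :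
    ∑ j ∈ Icc j1 j2, a i j = 1 := by
  obtain ⟨j0, rfl⟩ : ∃ j0, j1 = j0 + 1 := ⟨j1 - 1, by omega⟩
  obtain ⟨j3, rfl⟩ : ∃ j3, j2 = j3 + 1 := ⟨j2 - 1, by omega⟩
  have hkey : ∑ j ∈ Icc 1 (j3+1), a i j
      = ∑ j ∈ Icc 1 j0, a i j + ∑ j ∈ Icc (j0+1) (j3+1), a i j := sum_split _ (by omega)
  have e1 : ∑ j ∈ Icc 1 (j0+1), a i j = ∑ j ∈ Icc 1 j0, a i j + a i (j0+1) :=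
    Finset.sum_Icc_succ_top (by omega) _
  have e2 : ∑ j ∈ Icc 1 (j3+1), a i j = ∑ j ∈ Icc 1 j3, a i j + a i (j3+1) :=
    Finset.sum_Icc_succ_top (by omega) _
  have h0 : ∑ j ∈ Icc 1 j0, a i j = 0 ∨ ∑ j ∈ Icc 1 j0, a i j = 1 :=
    hA.2.2.2.2.1 i j0 hi1 hi2 (by omega)
  have hb1 : ∑ j ∈ Icc 1 (j0+1), a i j = 0 ∨ ∑ j ∈ Icc 1 (j0+1), a i j = 1 :=
    hA.2.2.2.2.1 i (j0+1) hi1 hi2 (by omega)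
  have h3 : ∑ j ∈ Icc 1 j3, a i j = 0 ∨ ∑ j ∈ Icc 1 j3, a i j = 1 :=
    hA.2.2.2.2.1 i j3 hi1 hi2 (by omega)
  have hb2 : ∑ j ∈ Icc 1 (j3+1), a i j = 0 ∨ ∑ j ∈ Icc 1 (j3+1), a i j = 1 :=
    hA.2.2.2.2.1 i (j3+1) hi1 hi2 hj2
  have hs0 : ∑ j ∈ Icc 1 j0, a i j = 0 := by
    rcases h0 with h|h <;> rcases hb1 with h'|h' <;> linarith
  have hs2 : ∑ j ∈ Icc 1 (j3+1), a i j = 1 := by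
    rcases h3 with h|h <;> rcases hb2 with h'|h' <;> linarith
  linarith


lemma rect_main (hA : IsASM n a) (hdense : IsDense a) {i1 i2 j1 j2 : ℕ}
    (h1 : 1 ≤ i1) (h12 : i1 ≤ i2) (h2 : i2 ≤ n) (h3 : 1 ≤ j1) (h34 : j1 ≤ j2) (h4 : j2 ≤ n) :
    -1 ≤ ∑ i ∈ Icc i1 i2, ∑ j ∈ Icc j1 j2, a i j ∧
    (∑ i ∈ Icc i1 i2, ∑ j ∈ Icc j1 j2, a i j < 0 →
      a i1 j1 = -1 ∧ a i1 j2 = -1 ∧ a i2 j1 = -1 ∧ a i2 j2 = -1) := by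
  set c : ℕ → ℝ := fun i => ∑ j ∈ Icc j1 j2, a i j with hcdef
  -- step lemmas
  have hstep : ∀ k, i1 ≤ k → k < i2 → c k < 0 → c (k+1) = 1 := by
    intro k hk hk2 hneg
    have hk1 : 1 ≤ k := le_trans h1 hk
    have hkn : k ≤ n := le_trans (le_of_lt hk2) h2
    obtain ⟨e1, e2, _⟩ := neg_row hA hdense hk1 hkn h3 h34 h4 hneg
    obtain ⟨hk1n, f1⟩ := col_succ hA hdense hk1 hkn h3 (le_trans h34 h4) e1
    obtain ⟨_, f2⟩ := col_succ hA hdense hk1 hkn (le_trans h3 h34) h4 e2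
    exact row_sum_one hA (by omega) hk1n h3 h34 h4 f1 f2
  have hstep' : ∀ k, i1 ≤ k → k < i2 → c (k+1) < 0 → c k = 1 := by
    intro k hk hk2 hneg
    have hk1n : k + 1 ≤ n := by omega
    obtain ⟨e1, e2, _⟩ := neg_row hA hdense (by omega) hk1n h3 h34 h4 hneg
    obtain ⟨_, f1⟩ := col_pred hA hdense hk1n h3 (le_trans h34 h4) e1
    obtain ⟨_, f2⟩ := col_pred hA hdense hk1n (le_trans h3 h34) h4 e2
    exact row_sum_one hA (le_trans h1 hk) (by omega) h3 h34 h4 f1 f2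
  have base : ∀ k, i1 ≤ k → k ≤ i2 →
      (0 ≤ c k ∨ (c k = -1 ∧ c k < 0)) := by
    intro k hk hk2
    by_cases hc : c k < 0
    · right
      exact ⟨(neg_row hA hdense (le_trans h1 hk) (le_trans hk2 h2) h3 h34 h4 hc).2.2, hc⟩
    · left; linarith [not_lt.1 hc]
  -- upward induction
  have up : ∀ k, i1 ≤ k → k ≤ i2 →
      (0 ≤ ∑ i ∈ Icc i1 k, c i ∨ (-1 ≤ ∑ i ∈ Icc i1 k, c i ∧ c k < 0)) := by
    intro k hk
    induction k, hk using Nat.le_induction with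
    | base =>
      intro _
      rw [Finset.Icc_self, Finset.sum_singleton]
      rcases base i1 le_rfl h12 with h | ⟨h, h'⟩
      · exact Or.inl h
      · exact Or.inr ⟨by rw [h], h'⟩
    | succ k hk IH =>
      intro hk2
      have hki : k ≤ i2 := by omega
      have hsum : ∑ i ∈ Icc i1 (k+1), c i = ∑ i ∈ Icc i1 k, c i + c (k+1) :=
        Finset.sum_Icc_succ_top (by omega) _
      rcases IH hki with h | ⟨hT, hck⟩
      · by_cases hc1 : c (k+1) < 0
        · right
          refine ⟨?_, hc1⟩
          have hv := (neg_row hA hdense (by omega) (by omega) h3 h34 h4 hc1).2.2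
          rw [hsum]
          have : c (k+1) = -1 := hv
          linarith
        · left; rw [hsum]; linarith [not_lt.1 hc1]
      · have hc1 := hstep k hk (by omega) hck
        left; rw [hsum, hc1]; linarith
  -- downward induction
  have down : ∀ d k, k + d = i2 → i1 ≤ k →
      (0 ≤ ∑ i ∈ Icc k i2, c i ∨ (-1 ≤ ∑ i ∈ Icc k i2, c i ∧ c k < 0)) := by
    intro d
    induction d with
    | zero =>
      intro k hk hk1
      have : k = i2 := by omega
      subst this
      rw [Finset.Icc_self, Finset.sum_singleton]
      rcases base k hk1 le_rfl with h | ⟨h, h'⟩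
      · exact Or.inl h
      · exact Or.inr ⟨by rw [h], h'⟩
    | succ d IH =>
      intro k hk hk1
      have hki2 : k < i2 := by omega
      have h2' := IH (k+1) (by omega) (by omega)
      have hins : Icc k i2 = insert k (Icc (k+1) i2) := by
        rw [Finset.Icc_add_one_left_eq_Ioc]
        exact (Finset.Ioc_insert_left (le_of_lt hki2)).symm
      have hsum : ∑ i ∈ Icc k i2, c i = c k + ∑ i ∈ Icc (k+1) i2, c i := by
        rw [hins, Finset.sum_insert (by simp)]
      rcases h2' with h | ⟨hU, hck1⟩
      · by_cases hc1 : c k < 0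
        · right
          refine ⟨?_, hc1⟩
          have hv := (neg_row hA hdense (le_trans h1 hk1) (by omega) h3 h34 h4 hc1).2.2
          rw [hsum]
          have : c k = -1 := hv
          linarith
        · left; rw [hsum]; linarith [not_lt.1 hc1]
      · have hc1 := hstep' k hk1 hki2 hck1
        left; rw [hsum, hc1]; linarith
  constructor
  · rcases up i2 h12 le_rfl with h | ⟨h, _⟩ <;> linarith
  · intro hS
    have hup := up i2 h12 le_rfl
    have hdown := down (i2 - i1) i1 (by omega) le_rfl
    have hci2 : c i2 < 0 := by
      rcases hup with h | ⟨_, h⟩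
      · exfalso; exact absurd hS (not_lt.2 h)
      · exact h
    have hci1 : c i1 < 0 := by
      rcases hdown with h | ⟨_, h⟩
      · exfalso; exact absurd hS (not_lt.2 h)
      · exact h
    obtain ⟨p1, p2, _⟩ := neg_row hA hdense h1 (le_trans h12 h2) h3 h34 h4 hci1
    obtain ⟨q1, q2, _⟩ := neg_row hA hdense (le_trans h1 h12) h2 h3 h34 h4 hci2
    exact ⟨p1, p2, q1, q2⟩

end ASMaux

namespace ASMaux

lemma vol_Qmat (a : ℕ → ℕ → ℝ) {r r' s s' : ℕ} (h1 : r ≤ r') (h2 : s ≤ s') :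
    vol (Qmat a) r r' s s' = ∑ i ∈ Icc (r+1) r', ∑ j ∈ Icc (s+1) s', a i j := by
  have e1 : Qmat a r s' = Qmat a r s + ∑ i ∈ Icc 1 r, ∑ j ∈ Icc (s+1) s', a i j := by
    unfold Qmat
    rw [← Finset.sum_add_distrib]
    exact Finset.sum_congr rfl (fun i _ => sum_split (fun j => a i j) h2)
  have e2 : Qmat a r' s = Qmat a r s + ∑ i ∈ Icc (r+1) r', ∑ j ∈ Icc 1 s, a i j := by
    unfold Qmat
    exact sum_split (fun i => ∑ j ∈ Icc 1 s, a i j) h1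
  have e3 : Qmat a r' s' = Qmat a r s' + ∑ i ∈ Icc (r+1) r', ∑ j ∈ Icc 1 s, a i j
      + ∑ i ∈ Icc (r+1) r', ∑ j ∈ Icc (s+1) s', a i j := by
    have e4 : ∑ i ∈ Icc (r+1) r', ∑ j ∈ Icc 1 s', a i j
        = ∑ i ∈ Icc (r+1) r', ∑ j ∈ Icc 1 s, a i j
          + ∑ i ∈ Icc (r+1) r', ∑ j ∈ Icc (s+1) s', a i j := by
      rw [← Finset.sum_add_distrib]
      exact Finset.sum_congr rfl (fun i _ => sum_split (fun j => a i j) h2)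
    have e5 : Qmat a r' s' = Qmat a r s' + ∑ i ∈ Icc (r+1) r', ∑ j ∈ Icc 1 s', a i j := by
      unfold Qmat
      exact sum_split (fun i => ∑ j ∈ Icc 1 s', a i j) h1
    rw [e5, e4]; ring
  unfold vol
  rw [e3, e1, e2]
  ring

lemma Dgen {s : Finset (ℕ × ℕ)} {g : ℕ × ℕ → ℝ} {corner : ℝ} {p0 : ℕ × ℕ}
    (hmem : corner = -1 → p0 ∈ s) (hg0 : corner = -1 → g p0 = -1)
    (hall : ∀ p ∈ s, -1 ≤ g p ∧ (g p < 0 → corner = -1)) :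
    (s.fold min 0 g = 0 ∨ s.fold min 0 g = -1) ∧ (s.fold min 0 g = -1 ↔ corner = -1) := by
  have hle0 : s.fold min 0 g ≤ 0 := (Finset.fold_min_le 0).2 (Or.inl le_rfl)
  have hge : (-1 : ℝ) ≤ s.fold min 0 g :=
    (Finset.le_fold_min _).2 ⟨by norm_num, fun p hp => (hall p hp).1⟩
  by_cases hc : corner = -1
  · have heq : s.fold min 0 g = -1 :=
      le_antisymm ((Finset.fold_min_le _).2 (Or.inr ⟨p0, hmem hc, le_of_eq (hg0 hc)⟩)) hge
    exact ⟨Or.inr heq, by rw [heq]; exact ⟨fun _ => hc, fun _ => rfl⟩⟩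
  · have heq : s.fold min 0 g = 0 :=
      le_antisymm hle0 ((Finset.le_fold_min _).2
        ⟨le_rfl, fun p hp => not_lt.1 fun h => hc ((hall p hp).2 h)⟩)
    rw [heq]
    exact ⟨Or.inl rfl, ⟨fun h => by norm_num at h, fun h => absurd h hc⟩⟩

end ASMaux

open ASMaux

/-- For a proper dense ASM `A` with associated quasi-copula `Q = Q(A)`,
every entry of the four directional defect matrices is `0` or `−1`, and each equals
`−1` exactly when the matrix entry in the corresponding corner direction equals `−1`. -/
theorem dense_ASM_directional_defects (n : ℕ) (a : ℕ → ℕ → ℝ)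
    (hA : IsASM n a) (hdense : IsDense a) (hproper : IsProper a) :
    ∀ r s, r ≤ n → s ≤ n →
      (Dse n (Qmat a) r s = 0 ∨ Dse n (Qmat a) r s = -1) ∧
      (Dsw n (Qmat a) r s = 0 ∨ Dsw n (Qmat a) r s = -1) ∧
      (Dnw n (Qmat a) r s = 0 ∨ Dnw n (Qmat a) r s = -1) ∧
      (Dne n (Qmat a) r s = 0 ∨ Dne n (Qmat a) r s = -1) ∧
      (Dse n (Qmat a) r s = -1 ↔ a (r+1) (s+1) = -1) ∧
      (Dsw n (Qmat a) r s = -1 ↔ a (r+1) s = -1) ∧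
      (Dnw n (Qmat a) r s = -1 ↔ a r s = -1) ∧
      (Dne n (Qmat a) r s = -1 ↔ a r (s+1) = -1) := by
  intro r s hr hs
  -- SE
  have se_all : ∀ p ∈ Icc (r+1) n ×ˢ Icc (s+1) n,
      (-1 : ℝ) ≤ vol (Qmat a) r p.1 s p.2 ∧
      (vol (Qmat a) r p.1 s p.2 < 0 → a (r+1) (s+1) = -1) := by
    intro p hp
    rw [Finset.mem_product, Finset.mem_Icc, Finset.mem_Icc] at hp
    rw [vol_Qmat a (by omega : r ≤ p.1) (by omega : s ≤ p.2)]
    have H := rect_main hA hdense (by omega) (by omega : r+1 ≤ p.1) (by omega)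
      (by omega) (by omega : s+1 ≤ p.2) (by omega)
    exact ⟨H.1, fun h => (H.2 h).1⟩
  have se_mem : a (r+1) (s+1) = -1 → ((r+1, s+1) : ℕ × ℕ) ∈ Icc (r+1) n ×ˢ Icc (s+1) n := by
    intro hc
    obtain ⟨_, h1, _, h2⟩ := bounds_of_ne hA (by rw [hc]; norm_num)
    simp only [Finset.mem_product, Finset.mem_Icc]
    omega
  have se_g : a (r+1) (s+1) = -1 → vol (Qmat a) r (r+1) s (s+1) = -1 := by
    intro hc
    rw [vol_Qmat a (by omega) (by omega)]
    simp [Finset.Icc_self, hc]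
  have Hse := Dgen se_mem se_g se_all
  -- SW
  have sw_all : ∀ p ∈ Icc (r+1) n ×ˢ range s,
      (-1 : ℝ) ≤ vol (Qmat a) r p.1 p.2 s ∧
      (vol (Qmat a) r p.1 p.2 s < 0 → a (r+1) s = -1) := by
    intro p hp
    rw [Finset.mem_product, Finset.mem_Icc, Finset.mem_range] at hp
    rw [vol_Qmat a (by omega : r ≤ p.1) (by omega : p.2 ≤ s)]
    have H := rect_main hA hdense (by omega) (by omega : r+1 ≤ p.1) (by omega)
      (by omega) (by omega : p.2+1 ≤ s) hs
    exact ⟨H.1, fun h => (H.2 h).2.1⟩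
  have sw_mem : a (r+1) s = -1 → ((r+1, s-1) : ℕ × ℕ) ∈ Icc (r+1) n ×ˢ range s := by
    intro hc
    obtain ⟨_, h1, h2, _⟩ := bounds_of_ne hA (by rw [hc]; norm_num)
    simp only [Finset.mem_product, Finset.mem_Icc, Finset.mem_range]
    omega
  have sw_g : a (r+1) s = -1 → vol (Qmat a) r (r+1) (s-1) s = -1 := by
    intro hc
    obtain ⟨_, h1, h2, _⟩ := bounds_of_ne hA (by rw [hc]; norm_num)
    rw [vol_Qmat a (by omega) (by omega : s - 1 ≤ s), show s - 1 + 1 = s by omega]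
    simp [Finset.Icc_self, hc]
  have Hsw := Dgen sw_mem sw_g sw_all
  -- NW
  have nw_all : ∀ p ∈ range r ×ˢ range s,
      (-1 : ℝ) ≤ vol (Qmat a) p.1 r p.2 s ∧
      (vol (Qmat a) p.1 r p.2 s < 0 → a r s = -1) := by
    intro p hp
    rw [Finset.mem_product, Finset.mem_range, Finset.mem_range] at hp
    rw [vol_Qmat a (by omega : p.1 ≤ r) (by omega : p.2 ≤ s)]
    have H := rect_main hA hdense (by omega) (by omega : p.1+1 ≤ r) hr
      (by omega) (by omega : p.2+1 ≤ s) hs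
    exact ⟨H.1, fun h => (H.2 h).2.2.2⟩
  have nw_mem : a r s = -1 → ((r-1, s-1) : ℕ × ℕ) ∈ range r ×ˢ range s := by
    intro hc
    obtain ⟨h1, _, h2, _⟩ := bounds_of_ne hA (by rw [hc]; norm_num)
    simp only [Finset.mem_product, Finset.mem_range]
    omega
  have nw_g : a r s = -1 → vol (Qmat a) (r-1) r (s-1) s = -1 := by
    intro hc
    obtain ⟨h1, _, h2, _⟩ := bounds_of_ne hA (by rw [hc]; norm_num)
    rw [vol_Qmat a (by omega : r - 1 ≤ r) (by omega : s - 1 ≤ s),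
      show r - 1 + 1 = r by omega, show s - 1 + 1 = s by omega]
    simp [Finset.Icc_self, hc]
  have Hnw := Dgen nw_mem nw_g nw_all
  -- NE
  have ne_all : ∀ p ∈ range r ×ˢ Icc (s+1) n,
      (-1 : ℝ) ≤ vol (Qmat a) p.1 r s p.2 ∧
      (vol (Qmat a) p.1 r s p.2 < 0 → a r (s+1) = -1) := by
    intro p hp
    rw [Finset.mem_product, Finset.mem_range, Finset.mem_Icc] at hp
    rw [vol_Qmat a (by omega : p.1 ≤ r) (by omega : s ≤ p.2)]
    have H := rect_main hA hdense (by omega) (by omega : p.1+1 ≤ r) hr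
      (by omega) (by omega : s+1 ≤ p.2) (by omega)
    exact ⟨H.1, fun h => (H.2 h).2.2.1⟩
  have ne_mem : a r (s+1) = -1 → ((r-1, s+1) : ℕ × ℕ) ∈ range r ×ˢ Icc (s+1) n := by
    intro hc
    obtain ⟨h1, _, _, h2⟩ := bounds_of_ne hA (by rw [hc]; norm_num)
    simp only [Finset.mem_product, Finset.mem_range, Finset.mem_Icc]
    omega
  have ne_g : a r (s+1) = -1 → vol (Qmat a) (r-1) r s (s+1) = -1 := by
    intro hc
    obtain ⟨h1, _, _, h2⟩ := bounds_of_ne hA (by rw [hc]; norm_num)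
    rw [vol_Qmat a (by omega : r - 1 ≤ r) (by omega), show r - 1 + 1 = r by omega]
    simp [Finset.Icc_self, hc]
  have Hne := Dgen ne_mem ne_g ne_all
  exact ⟨Hse.1, Hsw.1, Hnw.1, Hne.1, Hse.2, Hsw.2, Hnw.2, Hne.2⟩
end

section
/- Let A = (a_{ij}) be a proper dense alternating sign matrix of size n and let Q = Q(A) be the associated discrete quasi-copula. Then every entry of the main defect matrix D_M^Q and of the opposite defect matrix D_O^Q is equal to 0 or −1, and for all (r,s) ∈ L_n × L_n (reading a_{ij} = 0 whenever i or j lies outside {1,…,n}): (e) D_M^Q(r,s) = −1 if and only if min{a_{r+1,s+1}, a_{r,s}} = −1; (f) D_O^Q(r,s) = −1 if and only if min{a_{r+1,s}, a_{r,s+1}} = −1. -/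
open Finset

section DenseASMAux
variable {n : ℕ} {a : ℕ → ℕ → ℝ}

lemma Icc_one_eq_Ioc (k : ℕ) : Icc 1 k = Ioc 0 k := Finset.Icc_add_one_left_eq_Ioc 0 k

lemma sum_split_s8 {m k : ℕ} (hmk : m ≤ k) (f : ℕ → ℝ) :
    ∑ x ∈ Icc 1 k, f x = (∑ x ∈ Icc 1 m, f x) + ∑ x ∈ Icc (m+1) k, f x := by
  rw [Icc_one_eq_Ioc, Icc_one_eq_Ioc, Finset.Icc_add_one_left_eq_Ioc]
  exact (Finset.sum_Ioc_consecutive f (Nat.zero_le m) hmk).symm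
lemma IsASM.transpose (hA : IsASM n a) : IsASM n (fun i j => a j i) := by
  obtain ⟨h1, h2, h3, h4, h5, h6⟩ := hA
  exact ⟨fun i j h => h1 j i (by tauto), fun i j => h2 j i, h4, h3, h6, h5⟩

lemma IsDense.transpose (hd : IsDense a) : IsDense (fun i j => a j i) :=
  ⟨fun i j₁ j₂ j₃ => hd.2 i j₁ j₂ j₃, fun j i₁ i₂ i₃ => hd.1 j i₁ i₂ i₃⟩

lemma rowStruct (hA : IsASM n a) (hd : IsDense a) {i : ℕ} (hi1 : 1 ≤ i) (hin : i ≤ n) :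
    ∃ l u : ℕ, 1 ≤ l ∧ l ≤ u ∧ u ≤ n ∧
      (∀ j, a i j ≠ 0 ↔ (l ≤ j ∧ j ≤ u)) ∧
      (∀ j, l ≤ j → j ≤ u → a i j = if Even (j - l) then 1 else -1) ∧
      (∀ t, t ≤ n → (∑ j ∈ Icc 1 t, a i j) =
        if t < l then 0 else if u ≤ t then 1 else if Even (t - l) then 1 else 0) := by
  classical
  obtain ⟨hsupp, hent, hrow, hcol, hrp, hcp⟩ := hA
  set S := (Icc 1 n).filter (fun j => a i j ≠ 0) with hSdef
  have hSne : S.Nonempty := by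
    by_contra h
    have h0 : ∀ j ∈ Icc 1 n, a i j = 0 := by
      intro j hj
      by_contra hne
      exact h ⟨j, Finset.mem_filter.2 ⟨hj, hne⟩⟩
    have h1 := hrow i hi1 hin
    rw [Finset.sum_eq_zero h0] at h1
    norm_num at h1
  set l := S.min' hSne with hldef
  set u := S.max' hSne with hudef
  have hlmem' := S.min'_mem hSne
  have humem' := S.max'_mem hSne
  have hlu : l ≤ u := Finset.min'_le _ _ humem'
  have hlmem := Finset.mem_filter.1 hlmem'
  have humem := Finset.mem_filter.1 humem'
  rw [Finset.mem_Icc] at hlmem humem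
  have hl1 : 1 ≤ l := hlmem.1.1
  have hun : u ≤ n := humem.1.2
  have hsuppiff : ∀ j, a i j ≠ 0 ↔ (l ≤ j ∧ j ≤ u) := by
    intro j
    constructor
    · intro hne
      have hjIcc : j ∈ Icc 1 n := by
        rw [Finset.mem_Icc]
        by_contra hc
        exact hne (hsupp i j (by intro h; exact hc ⟨h.2.2.1, h.2.2.2⟩))
      have hjS : j ∈ S := Finset.mem_filter.2 ⟨hjIcc, hne⟩
      exact ⟨Finset.min'_le _ _ hjS, Finset.le_max' _ _ hjS⟩
    · rintro ⟨hlj, hju⟩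
      rcases eq_or_lt_of_le hlj with rfl | hlt
      · exact hlmem.2
      rcases eq_or_lt_of_le hju with rfl | hlt2
      · exact humem.2
      exact hd.1 i l j u hlt hlt2 hlmem.2 humem.2
  have hPsucc : ∀ t : ℕ, (∑ j ∈ Icc 1 (t+1), a i j) = (∑ j ∈ Icc 1 t, a i j) + a i (t+1) :=
    fun t => Finset.sum_Icc_succ_top (by omega) _
  have hPlt : ∀ t, t < l → (∑ j ∈ Icc 1 t, a i j) = 0 := by
    intro t ht
    apply Finset.sum_eq_zero
    intro j hj
    rw [Finset.mem_Icc] at hj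
    by_contra hne
    have := (hsuppiff j).1 hne
    omega
  have hleq : l = (l - 1) + 1 := by omega
  have hPl : (∑ j ∈ Icc 1 l, a i j) = a i l := by
    conv_lhs => rw [hleq]
    rw [hPsucc (l-1), hPlt (l-1) (by omega), zero_add, ← hleq]
  have halne : a i l ≠ 0 := (hsuppiff l).2 ⟨le_rfl, hlu⟩
  have hal1 : a i l = 1 := by
    rcases hrp i l hi1 hin (hlu.trans hun) with h | h
    · rw [hPl] at h; exact absurd h halne
    · rw [hPl] at h; exact h
  have hblock : ∀ t, l ≤ t → t ≤ u →
      (∑ j ∈ Icc 1 t, a i j) = if Even (t - l) then 1 else 0 := by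
    intro t hlt
    induction t, hlt using Nat.le_induction with
    | base =>
      intro _
      rw [hPl, hal1, Nat.sub_self, if_pos (Even.zero)]
    | succ t hlt IH =>
      intro htu1
      have hIH := IH (by omega)
      have hane : a i (t+1) ≠ 0 := (hsuppiff _).2 ⟨by omega, htu1⟩
      have h01t1 := hrp i (t+1) hi1 hin (by omega)
      rw [hPsucc t, hIH] at h01t1
      rw [hPsucc t, hIH]
      have hpar : (t+1) - l = (t - l) + 1 := by omega
      by_cases he : Even (t - l)
      · have hne1 : ¬ Even ((t+1) - l) := by
          rw [hpar, Nat.even_add_one]; exact not_not_intro he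
        rw [if_pos he, if_neg hne1]
        rw [if_pos he] at h01t1
        rcases hent i (t+1) with h | h | h
        · rw [h]; norm_num
        · exact absurd h hane
        · rw [h] at h01t1; norm_num at h01t1
      · have hne1 : Even ((t+1) - l) := by
          rw [hpar, Nat.even_add_one]; exact he
        rw [if_neg he, if_pos hne1]
        rw [if_neg he] at h01t1
        rcases hent i (t+1) with h | h | h
        · rw [h] at h01t1; norm_num at h01t1
        · exact absurd h hane
        · rw [h]; norm_num
  have hafter : ∀ t, u ≤ t → t ≤ n → (∑ j ∈ Icc 1 t, a i j) = (∑ j ∈ Icc 1 u, a i j) := by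
    intro t hut
    induction t, hut using Nat.le_induction with
    | base => intro _; rfl
    | succ t hut IH =>
      intro htn
      have ha0 : a i (t+1) = 0 := by
        by_contra hne
        have := (hsuppiff _).1 hne
        omega
      rw [hPsucc, IH (by omega), ha0, add_zero]
  have hPu : (∑ j ∈ Icc 1 u, a i j) = 1 := by
    have h1 := hafter n hun le_rfl
    rw [hrow i hi1 hin] at h1
    exact h1.symm
  have haform : ∀ j, l ≤ j → j ≤ u → a i j = if Even (j - l) then 1 else -1 := by
    intro j hlj hju
    rcases eq_or_lt_of_le hlj with rfl | hlt
    · rw [Nat.sub_self, if_pos (Even.zero), hal1]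
    · have hj1 : j = (j-1)+1 := by omega
      have h1 : (∑ j' ∈ Icc 1 j, a i j') = (∑ j' ∈ Icc 1 (j-1), a i j') + a i j := by
        have h2 := hPsucc (j-1)
        rw [← hj1] at h2
        exact h2
      rw [hblock j hlj hju, hblock (j-1) (by omega) (by omega)] at h1
      have hpar : Even (j - l) ↔ ¬ Even ((j-1) - l) := by
        rw [show j - l = ((j-1) - l) + 1 by omega, Nat.even_add_one]
      by_cases he : Even (j - l)
      · rw [if_pos he]
        rw [if_pos he, if_neg (hpar.1 he)] at h1
        linarith
      · rw [if_neg he]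
        have he' : Even ((j-1) - l) := by rw [hpar, not_not] at he; exact he
        rw [if_neg he, if_pos he'] at h1
        linarith
  refine ⟨l, u, hl1, hlu, hun, hsuppiff, haform, ?_⟩
  intro t htn
  by_cases h1 : t < l
  · rw [if_pos h1]; exact hPlt t h1
  · rw [if_neg h1]
    by_cases h2 : u ≤ t
    · rw [if_pos h2, hafter t h2 htn]; exact hPu
    · rw [if_neg h2]; exact hblock t (by omega) (by omega)

lemma rowKey (hA : IsASM n a) (hd : IsDense a) {i q s : ℕ} (hi1 : 1 ≤ i) (hin : i ≤ n)
    (hq1 : 1 ≤ q) (hqs : q ≤ s) (hsn : s ≤ n) :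
    ((∑ j ∈ Icc q s, a i j) = -1 ∨ (∑ j ∈ Icc q s, a i j) = 0 ∨ (∑ j ∈ Icc q s, a i j) = 1) ∧
    ((∑ j ∈ Icc q s, a i j) = -1 → a i q = -1 ∧ a i s = -1 ∧ (s - q) % 2 = 0) ∧
    ((s - q) % 2 = 0 → a i q = 1 → (∑ j ∈ Icc q s, a i j) = 1) ∧
    ((s - q) % 2 = 0 → a i s = 1 → (∑ j ∈ Icc q s, a i j) = 1) := by
  obtain ⟨l, u, hl1, hlu, hun, hsuppiff, haform, hPform⟩ := rowStruct hA hd hi1 hin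
  have hsplit : (∑ j ∈ Icc q s, a i j)
      = (∑ j ∈ Icc 1 s, a i j) - (∑ j ∈ Icc 1 (q-1), a i j) := by
    have h := sum_split_s8 (show q - 1 ≤ s by omega) (a i)
    rw [show (q-1)+1 = q by omega] at h
    rw [h]; ring
  have h01s := hA.2.2.2.2.1 i s hi1 hin hsn
  have h01q := hA.2.2.2.2.1 i (q-1) hi1 hin (by omega)
  have hPs := hPform s hsn
  have hPq := hPform (q-1) (by omega)
  refine ⟨?_, ?_, ?_, ?_⟩
  · rcases h01s with h | h <;> rcases h01q with h' | h' <;>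
      rw [hsplit, h, h'] <;> norm_num
  · intro hc
    rw [hsplit] at hc
    rcases h01s with h | h <;> rcases h01q with h' | h' <;> rw [h, h'] at hc <;>
      try norm_num at hc
    -- surviving case: P s = 0, P (q-1) = 1
    have hs0 : (if s < l then (0:ℝ) else if u ≤ s then 1 else if Even (s - l) then 1 else 0)
        = 0 := by rw [← hPs]; exact h
    have hq1' : (if q-1 < l then (0:ℝ) else if u ≤ q-1 then 1 else
        if Even (q-1 - l) then 1 else 0) = 1 := by rw [← hPq]; exact h'
    split_ifs at hs0 with e1 e2 e3 <;> try norm_num at hs0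
    · -- s < l
      split_ifs at hq1' with f1 f2 f3 <;> try norm_num at hq1'
      · omega
      · omega
    · -- ¬ s < l, ¬ u ≤ s, ¬ Even (s - l)
      split_ifs at hq1' with f1 f2 f3 <;> try norm_num at hq1'
      · omega
      · -- l ≤ q-1 < u (¬ u ≤ q-1), Even (q-1-l)
        have hmods : (s - l) % 2 = 1 := by
          rw [Nat.even_iff] at e3; omega
        have hmodq : (q - 1 - l) % 2 = 0 := Nat.even_iff.1 f3
        refine ⟨?_, ?_, by omega⟩
        · rw [haform q (by omega) (by omega), if_neg ?_]
          rw [Nat.even_iff]; omega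
        · rw [haform s (by omega) (by omega), if_neg e3]
  · intro hpar haq
    have hqne : a i q ≠ 0 := by rw [haq]; norm_num
    obtain ⟨hlq, hqu⟩ := (hsuppiff q).1 hqne
    have hEq : (q - l) % 2 = 0 := by
      by_contra h
      rw [haform q hlq hqu, if_neg (by rw [Nat.even_iff]; omega)] at haq
      norm_num at haq
    have hs1 : (∑ j ∈ Icc 1 s, a i j) = 1 := by
      rw [hPs, if_neg (by omega)]
      by_cases h2 : u ≤ s
      · rw [if_pos h2]
      · rw [if_neg h2, if_pos (by rw [Nat.even_iff]; omega)]
    have hq0 : (∑ j ∈ Icc 1 (q-1), a i j) = 0 := by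
      rw [hPq]
      by_cases hh : q-1 < l
      · rw [if_pos hh]
      · rw [if_neg hh, if_neg (by omega), if_neg (by rw [Nat.even_iff]; omega)]
    rw [hsplit, hs1, hq0]; norm_num
  · intro hpar has
    have hsne : a i s ≠ 0 := by rw [has]; norm_num
    obtain ⟨hls, hsu⟩ := (hsuppiff s).1 hsne
    have hEs : (s - l) % 2 = 0 := by
      by_contra h
      rw [haform s hls hsu, if_neg (by rw [Nat.even_iff]; omega)] at has
      norm_num at has
    have hs1 : (∑ j ∈ Icc 1 s, a i j) = 1 := by
      rw [hPs, if_neg (by omega)]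
      by_cases h2 : u ≤ s
      · rw [if_pos h2]
      · rw [if_neg h2, if_pos (by rw [Nat.even_iff]; omega)]
    have hq0 : (∑ j ∈ Icc 1 (q-1), a i j) = 0 := by
      rw [hPq]
      by_cases hh : q-1 < l
      · rw [if_pos hh]
      · rw [if_neg hh, if_neg (by omega), if_neg (by rw [Nat.even_iff]; omega)]
    rw [hsplit, hs1, hq0]; norm_num

lemma colKey (hA : IsASM n a) (hd : IsDense a) {j p r : ℕ} (hj1 : 1 ≤ j) (hjn : j ≤ n)
    (hp1 : 1 ≤ p) (hpr : p ≤ r) (hrn : r ≤ n) :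
    ((∑ i ∈ Icc p r, a i j) = -1 ∨ (∑ i ∈ Icc p r, a i j) = 0 ∨ (∑ i ∈ Icc p r, a i j) = 1) ∧
    ((∑ i ∈ Icc p r, a i j) = -1 → a p j = -1 ∧ a r j = -1) := by
  have h := rowKey hA.transpose hd.transpose hj1 hjn hp1 hpr hrn
  exact ⟨h.1, fun hc => ⟨(h.2.1 hc).1, (h.2.1 hc).2.1⟩⟩

lemma rectMain (hA : IsASM n a) (hd : IsDense a) {p r q s : ℕ}
    (hp1 : 1 ≤ p) (hpr : p ≤ r) (hrn : r ≤ n) (hq1 : 1 ≤ q) (hqs : q ≤ s) (hsn : s ≤ n) :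
    (-1 ≤ ∑ i ∈ Icc p r, ∑ j ∈ Icc q s, a i j) ∧
    (a p q ≠ -1 → 0 ≤ ∑ i ∈ Icc p r, ∑ j ∈ Icc q s, a i j) ∧
    (a p s ≠ -1 → 0 ≤ ∑ i ∈ Icc p r, ∑ j ∈ Icc q s, a i j) ∧
    (a r q ≠ -1 → 0 ≤ ∑ i ∈ Icc p r, ∑ j ∈ Icc q s, a i j) ∧
    (a r s ≠ -1 → 0 ≤ ∑ i ∈ Icc p r, ∑ j ∈ Icc q s, a i j) := by
  classical
  by_cases hex : ∃ i ∈ Icc p r, (∑ j ∈ Icc q s, a i j) = -1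
  · obtain ⟨i₀, hi₀mem, hi₀⟩ := hex
    rw [Finset.mem_Icc] at hi₀mem
    obtain ⟨_, hkey, _, _⟩ :=
      rowKey hA hd (show 1 ≤ i₀ by omega) (show i₀ ≤ n by omega) hq1 hqs hsn
    obtain ⟨haq0, has0, hparity⟩ := hkey hi₀
    have hq_bound : ∀ i ∈ Icc p r, a i q ≤ ∑ j ∈ Icc q s, a i j := by
      intro i hi
      rw [Finset.mem_Icc] at hi
      obtain ⟨htri, hneg, hposq, _⟩ :=
        rowKey hA hd (show 1 ≤ i by omega) (show i ≤ n by omega) hq1 hqs hsn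
      rcases hA.2.1 i q with h | h | h
      · rw [h]; rcases htri with h' | h' | h' <;> rw [h'] <;> norm_num
      · rw [h]
        rcases htri with h' | h' | h'
        · exfalso; have := (hneg h').1; rw [h] at this; norm_num at this
        · rw [h']
        · rw [h']; norm_num
      · rw [h, hposq hparity h]
    have hs_bound : ∀ i ∈ Icc p r, a i s ≤ ∑ j ∈ Icc q s, a i j := by
      intro i hi
      rw [Finset.mem_Icc] at hi
      obtain ⟨htri, hneg, _, hposs⟩ :=
        rowKey hA hd (show 1 ≤ i by omega) (show i ≤ n by omega) hq1 hqs hsn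
      rcases hA.2.1 i s with h | h | h
      · rw [h]; rcases htri with h' | h' | h' <;> rw [h'] <;> norm_num
      · rw [h]
        rcases htri with h' | h' | h'
        · exfalso; have := (hneg h').2.1; rw [h] at this; norm_num at this
        · rw [h']
        · rw [h']; norm_num
      · rw [h, hposs hparity h]
    have hVq : (∑ i ∈ Icc p r, a i q) ≤ ∑ i ∈ Icc p r, ∑ j ∈ Icc q s, a i j :=
      Finset.sum_le_sum hq_bound
    have hVs : (∑ i ∈ Icc p r, a i s) ≤ ∑ i ∈ Icc p r, ∑ j ∈ Icc q s, a i j :=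
      Finset.sum_le_sum hs_bound
    obtain ⟨htriq, hnegq⟩ := colKey hA hd hq1 (hqs.trans hsn) hp1 hpr hrn
    obtain ⟨htris, hnegs⟩ := colKey hA hd (hq1.trans hqs) hsn hp1 hpr hrn
    refine ⟨?_, ?_, ?_, ?_, ?_⟩
    · rcases htriq with h | h | h <;> rw [h] at hVq <;> linarith
    · intro hne
      rcases htriq with h | h | h
      · exact absurd (hnegq h).1 hne
      · rw [h] at hVq; linarith
      · rw [h] at hVq; linarith
    · intro hne
      rcases htris with h | h | h
      · exact absurd (hnegs h).1 hne
      · rw [h] at hVs; linarith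
      · rw [h] at hVs; linarith
    · intro hne
      rcases htriq with h | h | h
      · exact absurd (hnegq h).2 hne
      · rw [h] at hVq; linarith
      · rw [h] at hVq; linarith
    · intro hne
      rcases htris with h | h | h
      · exact absurd (hnegs h).2 hne
      · rw [h] at hVs; linarith
      · rw [h] at hVs; linarith
  · push_neg at hex
    have hge : 0 ≤ ∑ i ∈ Icc p r, ∑ j ∈ Icc q s, a i j := by
      apply Finset.sum_nonneg
      intro i hi
      have hi' := hi
      rw [Finset.mem_Icc] at hi'
      obtain ⟨htri, _, _, _⟩ :=
        rowKey hA hd (show 1 ≤ i by omega) (show i ≤ n by omega) hq1 hqs hsn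
      rcases htri with h | h | h
      · exact absurd h (hex i hi)
      · rw [h]
      · rw [h]; norm_num
    exact ⟨by linarith, fun _ => hge, fun _ => hge, fun _ => hge, fun _ => hge⟩

lemma volEq {p r q s : ℕ} (hpr : p ≤ r) (hqs : q ≤ s) :
    vol (Qmat a) p r q s = ∑ i ∈ Icc (p+1) r, ∑ j ∈ Icc (q+1) s, a i j := by
  unfold vol Qmat
  rw [sum_split_s8 hpr (fun i => ∑ j ∈ Icc 1 s, a i j),
    sum_split_s8 hpr (fun i => ∑ j ∈ Icc 1 q, a i j)]
  have h2 : ∀ i : ℕ, (∑ j ∈ Icc 1 s, a i j) - (∑ j ∈ Icc 1 q, a i j)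
      = ∑ j ∈ Icc (q+1) s, a i j := by
    intro i; rw [sum_split_s8 hqs (a i)]; ring
  have hXY : (∑ i ∈ Icc (p+1) r, ∑ j ∈ Icc 1 s, a i j)
      - (∑ i ∈ Icc (p+1) r, ∑ j ∈ Icc 1 q, a i j)
      = ∑ i ∈ Icc (p+1) r, ∑ j ∈ Icc (q+1) s, a i j := by
    rw [← Finset.sum_sub_distrib]
    exact Finset.sum_congr rfl fun i _ => h2 i
  linarith [hXY]

lemma Dse_spec (hA : IsASM n a) (hd : IsDense a) {r s : ℕ} (hr : r ≤ n) (hs : s ≤ n) :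
    (Dse n (Qmat a) r s = 0 ∨ Dse n (Qmat a) r s = -1) ∧
    (Dse n (Qmat a) r s = -1 ↔ a (r+1) (s+1) = -1) := by
  unfold Dse
  set F := (Icc (r+1) n ×ˢ Icc (s+1) n).fold min 0 (fun p => vol (Qmat a) r p.1 s p.2) with hF
  have hub : F ≤ 0 := (Finset.fold_min_le _).2 (Or.inl le_rfl)
  by_cases hc : a (r+1) (s+1) = -1
  · have hb : 1 ≤ r+1 ∧ r+1 ≤ n ∧ 1 ≤ s+1 ∧ s+1 ≤ n := by
      by_contra h
      rw [hA.1 (r+1) (s+1) h] at hc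
      norm_num at hc
    have hlb : (-1 : ℝ) ≤ F := by
      refine (Finset.le_fold_min _).2 ⟨by norm_num, ?_⟩
      rintro ⟨r', s'⟩ hx
      rw [Finset.mem_product, Finset.mem_Icc, Finset.mem_Icc] at hx
      show -1 ≤ vol (Qmat a) r r' s s'
      rw [volEq (by omega) (by omega)]
      exact (rectMain hA hd (by omega) (by omega) (by omega) (by omega) (by omega)
        (by omega)).1
    have hwit : vol (Qmat a) r (r+1) s (s+1) = a (r+1) (s+1) := by
      rw [volEq (Nat.le_succ r) (Nat.le_succ s), Finset.Icc_self, Finset.Icc_self,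
        Finset.sum_singleton, Finset.sum_singleton]
    have hle : F ≤ -1 := (Finset.fold_min_le _).2 (Or.inr ⟨(r+1, s+1), by
        rw [Finset.mem_product, Finset.mem_Icc, Finset.mem_Icc]; omega, by
        show vol (Qmat a) r (r+1) s (s+1) ≤ -1
        rw [hwit, hc]⟩)
    have heq : F = -1 := le_antisymm hle hlb
    exact ⟨Or.inr heq, iff_of_true heq hc⟩
  · have hlb : (0 : ℝ) ≤ F := by
      refine (Finset.le_fold_min _).2 ⟨le_rfl, ?_⟩
      rintro ⟨r', s'⟩ hx
      rw [Finset.mem_product, Finset.mem_Icc, Finset.mem_Icc] at hx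
      show 0 ≤ vol (Qmat a) r r' s s'
      rw [volEq (by omega) (by omega)]
      exact (rectMain hA hd (by omega) (by omega) (by omega) (by omega) (by omega)
        (by omega)).2.1 hc
    have heq : F = 0 := le_antisymm hub hlb
    exact ⟨Or.inl heq, iff_of_false (by rw [heq]; norm_num) hc⟩

lemma Dnw_spec (hA : IsASM n a) (hd : IsDense a) {r s : ℕ} (hr : r ≤ n) (hs : s ≤ n) :
    (Dnw n (Qmat a) r s = 0 ∨ Dnw n (Qmat a) r s = -1) ∧
    (Dnw n (Qmat a) r s = -1 ↔ a r s = -1) := by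
  unfold Dnw
  set F := (range r ×ˢ range s).fold min 0 (fun p => vol (Qmat a) p.1 r p.2 s) with hF
  have hub : F ≤ 0 := (Finset.fold_min_le _).2 (Or.inl le_rfl)
  by_cases hc : a r s = -1
  · have hb : 1 ≤ r ∧ r ≤ n ∧ 1 ≤ s ∧ s ≤ n := by
      by_contra h
      rw [hA.1 r s h] at hc
      norm_num at hc
    have hlb : (-1 : ℝ) ≤ F := by
      refine (Finset.le_fold_min _).2 ⟨by norm_num, ?_⟩
      rintro ⟨r', s'⟩ hx
      rw [Finset.mem_product, Finset.mem_range, Finset.mem_range] at hx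
      show -1 ≤ vol (Qmat a) r' r s' s
      rw [volEq (by omega) (by omega)]
      exact (rectMain hA hd (by omega) (by omega) (by omega) (by omega) (by omega)
        (by omega)).1
    have hwit : vol (Qmat a) (r-1) r (s-1) s = a r s := by
      rw [volEq (by omega) (by omega), show r-1+1 = r by omega, show s-1+1 = s by omega,
        Finset.Icc_self, Finset.Icc_self, Finset.sum_singleton, Finset.sum_singleton]
    have hle : F ≤ -1 := (Finset.fold_min_le _).2 (Or.inr ⟨(r-1, s-1), by
        rw [Finset.mem_product, Finset.mem_range, Finset.mem_range]; omega, by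
        show vol (Qmat a) (r-1) r (s-1) s ≤ -1
        rw [hwit, hc]⟩)
    have heq : F = -1 := le_antisymm hle hlb
    exact ⟨Or.inr heq, iff_of_true heq hc⟩
  · have hlb : (0 : ℝ) ≤ F := by
      refine (Finset.le_fold_min _).2 ⟨le_rfl, ?_⟩
      rintro ⟨r', s'⟩ hx
      rw [Finset.mem_product, Finset.mem_range, Finset.mem_range] at hx
      show 0 ≤ vol (Qmat a) r' r s' s
      rw [volEq (by omega) (by omega)]
      exact (rectMain hA hd (by omega) (by omega) (by omega) (by omega) (by omega)
        (by omega)).2.2.2.2 hc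
    have heq : F = 0 := le_antisymm hub hlb
    exact ⟨Or.inl heq, iff_of_false (by rw [heq]; norm_num) hc⟩

lemma Dsw_spec (hA : IsASM n a) (hd : IsDense a) {r s : ℕ} (hr : r ≤ n) (hs : s ≤ n) :
    (Dsw n (Qmat a) r s = 0 ∨ Dsw n (Qmat a) r s = -1) ∧
    (Dsw n (Qmat a) r s = -1 ↔ a (r+1) s = -1) := by
  unfold Dsw
  set F := (Icc (r+1) n ×ˢ range s).fold min 0 (fun p => vol (Qmat a) r p.1 p.2 s) with hF
  have hub : F ≤ 0 := (Finset.fold_min_le _).2 (Or.inl le_rfl)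
  by_cases hc : a (r+1) s = -1
  · have hb : 1 ≤ r+1 ∧ r+1 ≤ n ∧ 1 ≤ s ∧ s ≤ n := by
      by_contra h
      rw [hA.1 (r+1) s h] at hc
      norm_num at hc
    have hlb : (-1 : ℝ) ≤ F := by
      refine (Finset.le_fold_min _).2 ⟨by norm_num, ?_⟩
      rintro ⟨r', s'⟩ hx
      rw [Finset.mem_product, Finset.mem_Icc, Finset.mem_range] at hx
      show -1 ≤ vol (Qmat a) r r' s' s
      rw [volEq (by omega) (by omega)]
      exact (rectMain hA hd (by omega) (by omega) (by omega) (by omega) (by omega)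
        (by omega)).1
    have hwit : vol (Qmat a) r (r+1) (s-1) s = a (r+1) s := by
      rw [volEq (by omega) (by omega), show s-1+1 = s by omega,
        Finset.Icc_self, Finset.Icc_self, Finset.sum_singleton, Finset.sum_singleton]
    have hle : F ≤ -1 := (Finset.fold_min_le _).2 (Or.inr ⟨(r+1, s-1), by
        rw [Finset.mem_product, Finset.mem_Icc, Finset.mem_range]; omega, by
        show vol (Qmat a) r (r+1) (s-1) s ≤ -1
        rw [hwit, hc]⟩)
    have heq : F = -1 := le_antisymm hle hlb
    exact ⟨Or.inr heq, iff_of_true heq hc⟩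
  · have hlb : (0 : ℝ) ≤ F := by
      refine (Finset.le_fold_min _).2 ⟨le_rfl, ?_⟩
      rintro ⟨r', s'⟩ hx
      rw [Finset.mem_product, Finset.mem_Icc, Finset.mem_range] at hx
      show 0 ≤ vol (Qmat a) r r' s' s
      rw [volEq (by omega) (by omega)]
      exact (rectMain hA hd (by omega) (by omega) (by omega) (by omega) (by omega)
        (by omega)).2.2.1 hc
    have heq : F = 0 := le_antisymm hub hlb
    exact ⟨Or.inl heq, iff_of_false (by rw [heq]; norm_num) hc⟩

lemma Dne_spec (hA : IsASM n a) (hd : IsDense a) {r s : ℕ} (hr : r ≤ n) (hs : s ≤ n) :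
    (Dne n (Qmat a) r s = 0 ∨ Dne n (Qmat a) r s = -1) ∧
    (Dne n (Qmat a) r s = -1 ↔ a r (s+1) = -1) := by
  unfold Dne
  set F := (range r ×ˢ Icc (s+1) n).fold min 0 (fun p => vol (Qmat a) p.1 r s p.2) with hF
  have hub : F ≤ 0 := (Finset.fold_min_le _).2 (Or.inl le_rfl)
  by_cases hc : a r (s+1) = -1
  · have hb : 1 ≤ r ∧ r ≤ n ∧ 1 ≤ s+1 ∧ s+1 ≤ n := by
      by_contra h
      rw [hA.1 r (s+1) h] at hc
      norm_num at hc
    have hlb : (-1 : ℝ) ≤ F := by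
      refine (Finset.le_fold_min _).2 ⟨by norm_num, ?_⟩
      rintro ⟨r', s'⟩ hx
      rw [Finset.mem_product, Finset.mem_range, Finset.mem_Icc] at hx
      show -1 ≤ vol (Qmat a) r' r s s'
      rw [volEq (by omega) (by omega)]
      exact (rectMain hA hd (by omega) (by omega) (by omega) (by omega) (by omega)
        (by omega)).1
    have hwit : vol (Qmat a) (r-1) r s (s+1) = a r (s+1) := by
      rw [volEq (by omega) (by omega), show r-1+1 = r by omega,
        Finset.Icc_self, Finset.Icc_self, Finset.sum_singleton, Finset.sum_singleton]
    have hle : F ≤ -1 := (Finset.fold_min_le _).2 (Or.inr ⟨(r-1, s+1), by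
        rw [Finset.mem_product, Finset.mem_range, Finset.mem_Icc]; omega, by
        show vol (Qmat a) (r-1) r s (s+1) ≤ -1
        rw [hwit, hc]⟩)
    have heq : F = -1 := le_antisymm hle hlb
    exact ⟨Or.inr heq, iff_of_true heq hc⟩
  · have hlb : (0 : ℝ) ≤ F := by
      refine (Finset.le_fold_min _).2 ⟨le_rfl, ?_⟩
      rintro ⟨r', s'⟩ hx
      rw [Finset.mem_product, Finset.mem_range, Finset.mem_Icc] at hx
      show 0 ≤ vol (Qmat a) r' r s s'
      rw [volEq (by omega) (by omega)]
      exact (rectMain hA hd (by omega) (by omega) (by omega) (by omega) (by omega)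
        (by omega)).2.2.2.1 hc
    have heq : F = 0 := le_antisymm hub hlb
    exact ⟨Or.inl heq, iff_of_false (by rw [heq]; norm_num) hc⟩

lemma min_dich {x y : ℝ} (hx : x = 0 ∨ x = -1) (hy : y = 0 ∨ y = -1) :
    (min x y = 0 ∨ min x y = -1) ∧ (min x y = -1 ↔ (x = -1 ∨ y = -1)) := by
  rcases hx with rfl | rfl <;> rcases hy with rfl | rfl <;>
    constructor <;> norm_num [min_def]

lemma min_entry {x y : ℝ} (hx : x = -1 ∨ x = 0 ∨ x = 1) (hy : y = -1 ∨ y = 0 ∨ y = 1) :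
    (min x y = -1 ↔ (x = -1 ∨ y = -1)) := by
  rcases hx with rfl | rfl | rfl <;> rcases hy with rfl | rfl | rfl <;> norm_num [min_def]

end DenseASMAux

/-- For a proper dense ASM `A` with associated quasi-copula `Q = Q(A)`,
every entry of the main and the opposite defect matrices is `0` or `−1`, with
`D_M^Q(r,s) = −1 ↔ min{a_{r+1,s+1}, a_{r,s}} = −1` and
`D_O^Q(r,s) = −1 ↔ min{a_{r+1,s}, a_{r,s+1}} = −1`. -/
theorem dense_ASM_main_opposite_defects (n : ℕ) (a : ℕ → ℕ → ℝ)
    (hA : IsASM n a) (hdense : IsDense a) (hproper : IsProper a) :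
    ∀ r s, r ≤ n → s ≤ n →
      (DM n (Qmat a) r s = 0 ∨ DM n (Qmat a) r s = -1) ∧
      (DO n (Qmat a) r s = 0 ∨ DO n (Qmat a) r s = -1) ∧
      (DM n (Qmat a) r s = -1 ↔ min (a (r+1) (s+1)) (a r s) = -1) ∧
      (DO n (Qmat a) r s = -1 ↔ min (a (r+1) s) (a r (s+1)) = -1) := by
  intro r s hr hs
  obtain ⟨hse_d, hse_i⟩ := Dse_spec hA hdense hr hs
  obtain ⟨hnw_d, hnw_i⟩ := Dnw_spec hA hdense hr hs
  obtain ⟨hsw_d, hsw_i⟩ := Dsw_spec hA hdense hr hs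
  obtain ⟨hne_d, hne_i⟩ := Dne_spec hA hdense hr hs
  have hM := min_dich hse_d hnw_d
  have hO := min_dich hsw_d hne_d
  have hMeq : DM n (Qmat a) r s = min (Dse n (Qmat a) r s) (Dnw n (Qmat a) r s) := rfl
  have hOeq : DO n (Qmat a) r s = min (Dsw n (Qmat a) r s) (Dne n (Qmat a) r s) := rfl
  refine ⟨by rw [hMeq]; exact hM.1, by rw [hOeq]; exact hO.1, ?_, ?_⟩
  · rw [hMeq, hM.2, hse_i, hnw_i, min_entry (hA.2.1 _ _) (hA.2.1 _ _)]
  · rw [hOeq, hO.2, hsw_i, hne_i, min_entry (hA.2.1 _ _) (hA.2.1 _ _)]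
end

section
/- Let A = (a_{ij}) be a proper dense alternating sign matrix of size n, let Q = Q(A) be the associated discrete quasi-copula, and write a⁻_{ij} = min{a_{ij}, 0}, with a⁻_{ij} = 0 when i or j lies outside {1,…,n}. Then for all r,s ∈ {1,…,n}: D_↘^Q(r,s) = a⁻_{r+1,s+1}, D_↙^Q(r,s) = a⁻_{r+1,s}, D_↖^Q(r,s) = a⁻_{r,s}, D_↗^Q(r,s) = a⁻_{r,s+1}, D_M^Q(r,s) = min{a⁻_{r,s}, a⁻_{r+1,s+1}}, and D_O^Q(r,s) = min{a⁻_{r+1,s}, a⁻_{r,s+1}}. Equivalently, regarding the defect matrices as n×n matrices indexed by {1,…,n}², and letting J_n be the nilpotent upper-triangular Jordan matrix (ones on the superdiagonal, zeros elsewhere), A⁻ the entrywise negative part of A, and ∧ the entrywise minimum: D_↘^Q = J_n A⁻ J_nᵀ, D_↙^Q = J_n A⁻, D_↖^Q = A⁻, D_↗^Q = A⁻ J_nᵀ, D_M^Q = A⁻ ∧ J_n A⁻ J_nᵀ, and D_O^Q = J_n A⁻ ∧ A⁻ J_nᵀ. -/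
open Finset

/-! ### Auxiliary lemmas for the defect theorem -/

noncomputable def aPS (b : ℕ → ℕ → ℝ) (i t : ℕ) : ℝ := ∑ j ∈ Icc 1 t, b i j

def aTr (b : ℕ → ℕ → ℝ) : ℕ → ℕ → ℝ := fun i j => b j i
def aCR (n : ℕ) (b : ℕ → ℕ → ℝ) : ℕ → ℕ → ℝ := fun i j => b i (n+1-j)
def aRR (n : ℕ) (b : ℕ → ℕ → ℝ) : ℕ → ℕ → ℝ := fun i j => b (n+1-i) j

lemma aPS_succ (b : ℕ → ℕ → ℝ) (i t : ℕ) : aPS b i (t+1) = aPS b i t + b i (t+1) := by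
  simp only [aPS]
  rw [Finset.sum_Icc_succ_top (by omega : 1 ≤ t+1)]

lemma sum_Icc_eq_aPS (b : ℕ → ℕ → ℝ) (i q Q : ℕ) (hq : 1 ≤ q) (hqQ : q - 1 ≤ Q) :
    ∑ j ∈ Icc q Q, b i j = aPS b i Q - aPS b i (q-1) := by
  have h1 : Icc q Q = Ioc (q-1) Q := by ext z; simp only [mem_Icc, mem_Ioc]; omega
  have h2 : ∀ t : ℕ, aPS b i t = ∑ j ∈ Ioc 0 t, b i j := by
    intro t; simp only [aPS]; apply Finset.sum_congr ?_ (fun _ _ => rfl)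
    ext z; simp only [mem_Icc, mem_Ioc]; omega
  rw [h1, h2, h2]
  have := Finset.sum_Ioc_consecutive (fun j => b i j) (Nat.zero_le (q-1)) hqQ
  linarith

lemma a_rows01 {n : ℕ} {b : ℕ → ℕ → ℝ} (hA : IsASM n b) {i t : ℕ}
    (hi1 : 1 ≤ i) (hin : i ≤ n) (htn : t ≤ n) : aPS b i t = 0 ∨ aPS b i t = 1 :=
  hA.2.2.2.2.1 i t hi1 hin htn

lemma a_rowsN {n : ℕ} {b : ℕ → ℕ → ℝ} (hA : IsASM n b) {i : ℕ}
    (hi1 : 1 ≤ i) (hin : i ≤ n) : aPS b i n = 1 :=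
  hA.2.2.1 i hi1 hin

lemma neg_of_drop {n : ℕ} {b : ℕ → ℕ → ℝ} (hA : IsASM n b) (hd : IsDense b) {i w v : ℕ}
    (hi1 : 1 ≤ i) (hin : i ≤ n) (hwv : w < v) (hvn : v ≤ n)
    (h1 : aPS b i w = 1) (h0 : aPS b i v = 0) : b i (w+1) = -1 := by
  obtain ⟨j1, hj1m, hj1⟩ : ∃ j1 ∈ Icc 1 w, b i j1 ≠ 0 := by
    apply Finset.exists_ne_zero_of_sum_ne_zero
    show (∑ j ∈ Icc 1 w, b i j) ≠ 0
    have : (∑ j ∈ Icc 1 w, b i j) = aPS b i w := rfl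
    rw [this, h1]; norm_num
  obtain ⟨j3, hj3m, hj3⟩ : ∃ j3 ∈ Icc (v+1) n, b i j3 ≠ 0 := by
    apply Finset.exists_ne_zero_of_sum_ne_zero
    rw [sum_Icc_eq_aPS b i (v+1) n (by omega) (by omega)]
    have hvv : v + 1 - 1 = v := by omega
    rw [hvv, h0, a_rowsN hA hi1 hin]; norm_num
  rw [Finset.mem_Icc] at hj1m hj3m
  have hne : b i (w+1) ≠ 0 := hd.1 i j1 (w+1) j3 (by omega) (by omega) hj1 hj3
  have hps : aPS b i (w+1) = aPS b i w + b i (w+1) := aPS_succ b i w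
  have h01 := a_rows01 hA hi1 hin (show w+1 ≤ n by omega)
  rcases hA.2.1 i (w+1) with h | h | h
  · exact h
  · exact absurd h hne
  · rw [h1, h] at hps
    rcases h01 with h2 | h2 <;> rw [hps] at h2 <;> norm_num at h2

lemma pos_of_drop {n : ℕ} {b : ℕ → ℕ → ℝ} (hA : IsASM n b) (hd : IsDense b) {i u v : ℕ}
    (hi1 : 1 ≤ i) (hin : i ≤ n) (huv : u ≤ v) (hvn : v < n)
    (h1 : aPS b i u = 1) (h0 : aPS b i v = 0) : b i (v+1) = 1 := by
  obtain ⟨j1, hj1m, hj1⟩ : ∃ j1 ∈ Icc 1 u, b i j1 ≠ 0 := by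
    apply Finset.exists_ne_zero_of_sum_ne_zero
    show (∑ j ∈ Icc 1 u, b i j) ≠ 0
    have : (∑ j ∈ Icc 1 u, b i j) = aPS b i u := rfl
    rw [this, h1]; norm_num
  obtain ⟨j3, hj3m, hj3⟩ : ∃ j3 ∈ Icc (v+1) n, b i j3 ≠ 0 := by
    apply Finset.exists_ne_zero_of_sum_ne_zero
    rw [sum_Icc_eq_aPS b i (v+1) n (by omega) (by omega)]
    have hvv : v + 1 - 1 = v := by omega
    rw [hvv, h0, a_rowsN hA hi1 (by omega)]; norm_num
  rw [Finset.mem_Icc] at hj1m hj3m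
  have hne : b i (v+1) ≠ 0 := by
    rcases eq_or_lt_of_le hj3m.1 with h | h
    · rw [h]; exact hj3
    · exact hd.1 i j1 (v+1) j3 (by omega) h hj1 hj3
  have hps : aPS b i (v+1) = aPS b i v + b i (v+1) := aPS_succ b i v
  have h01 := a_rows01 hA hi1 (by omega) (show v+1 ≤ n by omega)
  rcases hA.2.1 i (v+1) with h | h | h
  · rw [h0, h] at hps
    rcases h01 with h2 | h2 <;> rw [hps] at h2 <;> norm_num at h2
  · exact absurd h hne
  · exact h

lemma isASM_aTr {n : ℕ} {b : ℕ → ℕ → ℝ} (hA : IsASM n b) : IsASM n (aTr b) := by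
  obtain ⟨h0, hval, hrow, hcol, hprow, hpcol⟩ := hA
  exact ⟨fun i j h => h0 j i (by tauto), fun i j => hval j i, hcol, hrow, hpcol, hprow⟩

lemma isDense_aTr {b : ℕ → ℕ → ℝ} (hd : IsDense b) : IsDense (aTr b) := ⟨hd.2, hd.1⟩

lemma sum_reflect (f : ℕ → ℝ) (A B N : ℕ) (hB : B ≤ N) :
    ∑ j ∈ Icc A B, f (N+1-j) = ∑ j ∈ Icc (N+1-B) (N+1-A), f j := by
  apply Finset.sum_nbij' (fun j => N+1-j) (fun j => N+1-j)
  · intro x hx; rw [Finset.mem_Icc] at *; omega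
  · intro x hx; rw [Finset.mem_Icc] at *; omega
  · intro x hx; rw [Finset.mem_Icc] at hx; omega
  · intro x hx; rw [Finset.mem_Icc] at hx; omega
  · intro x hx; rfl

lemma isASM_aCR {n : ℕ} {b : ℕ → ℕ → ℝ} (hA : IsASM n b) : IsASM n (aCR n b) := by
  obtain ⟨h0, hval, hrow, hcol, hprow, hpcol⟩ := hA
  refine ⟨?_, fun i j => hval i (n+1-j), ?_, ?_, ?_, ?_⟩
  · intro i j h
    apply h0; omega
  · intro i hi1 hin
    show (∑ j ∈ Icc 1 n, b i (n+1-j)) = 1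
    rw [sum_reflect (b i) 1 n n le_rfl]
    have e1 : n+1-n = 1 := by omega
    have e2 : n+1-1 = n := by omega
    rw [e1, e2]; exact hrow i hi1 hin
  · intro j hj1 hjn
    exact hcol (n+1-j) (by omega) (by omega)
  · intro i t hi1 hin htn
    show (∑ j ∈ Icc 1 t, b i (n+1-j)) = 0 ∨ (∑ j ∈ Icc 1 t, b i (n+1-j)) = 1
    rcases Nat.eq_zero_or_pos t with h | h
    · left; subst h; simp
    · rw [sum_reflect (b i) 1 t n htn]
      have e1 : n+1-1 = n := by omega
      rw [e1]
      have e2 : Icc (n+1-t) n = Ioc (n-t) n := by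
        ext z; simp only [mem_Icc, mem_Ioc]; omega
      rw [e2]
      have hsplit := Finset.sum_Ioc_consecutive (fun j => b i j)
        (Nat.zero_le (n-t)) (by omega : n-t ≤ n)
      have hIoc : ∀ u : ℕ, ∑ j ∈ Ioc 0 u, b i j = ∑ j ∈ Icc 1 u, b i j := by
        intro u; apply Finset.sum_congr ?_ (fun _ _ => rfl)
        ext z; simp only [mem_Icc, mem_Ioc]; omega
      rw [hIoc, hIoc] at hsplit
      have hfull : ∑ j ∈ Icc 1 n, b i j = 1 := hrow i hi1 hin
      have hpart := hprow i (n-t) hi1 hin (by omega)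
      rcases hpart with h2 | h2
      · right; linarith
      · left; linarith
  · intro j t hj1 hjn htn
    exact hpcol (n+1-j) t (by omega) (by omega) htn

lemma isDense_aCR {n : ℕ} {b : ℕ → ℕ → ℝ} (hA : IsASM n b) (hd : IsDense b) :
    IsDense (aCR n b) := by
  constructor
  · intro i j1 j2 j3 h12 h23 hne1 hne3
    show b i (n+1-j2) ≠ 0
    have hr1 : 1 ≤ i ∧ i ≤ n ∧ 1 ≤ n+1-j1 ∧ n+1-j1 ≤ n := by
      by_contra h; exact hne1 (hA.1 i (n+1-j1) h)
    have hr3 : 1 ≤ i ∧ i ≤ n ∧ 1 ≤ n+1-j3 ∧ n+1-j3 ≤ n := by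
      by_contra h; exact hne3 (hA.1 i (n+1-j3) h)
    exact hd.1 i (n+1-j3) (n+1-j2) (n+1-j1) (by omega) (by omega) hne3 hne1
  · intro j i1 i2 i3 h1 h2 hne1 hne3
    exact hd.2 (n+1-j) i1 i2 i3 h1 h2 hne1 hne3

lemma isASM_aRR {n : ℕ} {b : ℕ → ℕ → ℝ} (hA : IsASM n b) : IsASM n (aRR n b) :=
  isASM_aTr (isASM_aCR (isASM_aTr hA))

lemma isDense_aRR {n : ℕ} {b : ℕ → ℕ → ℝ} (hA : IsASM n b) (hd : IsDense b) :
    IsDense (aRR n b) :=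
  isDense_aTr (isDense_aCR (isASM_aTr hA) (isDense_aTr hd))

lemma step_pos {n : ℕ} {b : ℕ → ℕ → ℝ} (hA : IsASM n b) (hd : IsDense b) {i q Q : ℕ}
    (hi2 : 2 ≤ i) (hin : i ≤ n) (hq1 : 1 ≤ q) (hqQ : q ≤ Q) (hQn : Q ≤ n)
    (hS1 : aPS b i (q-1) = 1) (hS0 : aPS b i Q = 0) :
    aPS b (i-1) (q-1) = 0 ∧ aPS b (i-1) Q = 1 := by
  have hAt := isASM_aTr hA
  have hdt := isDense_aTr hd
  have hqn : q ≤ n := le_trans hqQ hQn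
  have hbq : b i q = -1 := by
    have := neg_of_drop hA hd (i := i) (w := q-1) (v := Q) (by omega) hin (by omega) hQn hS1 hS0
    rwa [show q-1+1 = q by omega] at this
  -- column q: partial sums
  have e1 : aPS (aTr b) q i = aPS (aTr b) q (i-1) + b i q := by
    have := aPS_succ (aTr b) q (i-1)
    rwa [show i-1+1 = i by omega] at this
  have cQ : aPS (aTr b) q (i-1) = 1 ∧ aPS (aTr b) q i = 0 := by
    rw [hbq] at e1
    rcases a_rows01 hAt hq1 hqn hin with h | h <;>
      rcases a_rows01 hAt hq1 hqn (show i-1 ≤ n by omega) with h' | h' <;>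
      constructor <;> linarith
  have hbq1 : b (i-1) q = 1 := by
    have e2 : aPS (aTr b) q (i-1) = aPS (aTr b) q (i-2) + b (i-1) q := by
      have := aPS_succ (aTr b) q (i-2)
      rwa [show i-2+1 = i-1 by omega] at this
    rcases a_rows01 hAt hq1 hqn (show i-2 ≤ n by omega) with h2 | h2
    · rw [cQ.1, h2] at e2; linarith
    · exfalso
      have hb0 : b (i-1) q = 0 := by rw [cQ.1, h2] at e2; linarith
      obtain ⟨i1, hm, hne⟩ : ∃ i1 ∈ Icc 1 (i-2), aTr b q i1 ≠ 0 := by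
        apply Finset.exists_ne_zero_of_sum_ne_zero
        show (∑ i' ∈ Icc 1 (i-2), aTr b q i') ≠ 0
        have : (∑ i' ∈ Icc 1 (i-2), aTr b q i') = aPS (aTr b) q (i-2) := rfl
        rw [this, h2]; norm_num
      rw [Finset.mem_Icc] at hm
      have := hd.2 q i1 (i-1) i (by omega) (by omega) hne (by rw [hbq]; norm_num)
      exact this hb0
  have him1 : 1 ≤ i - 1 := by omega
  have him1n : i - 1 ≤ n := by omega
  have e3 : aPS b (i-1) q = aPS b (i-1) (q-1) + b (i-1) q := by
    have := aPS_succ b (i-1) (q-1)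
    rwa [show q-1+1 = q by omega] at this
  have hS : aPS b (i-1) (q-1) = 0 ∧ aPS b (i-1) q = 1 := by
    rw [hbq1] at e3
    rcases a_rows01 hA him1 him1n (show q-1 ≤ n by omega) with h | h <;>
      rcases a_rows01 hA him1 him1n hqn with h' | h' <;>
      constructor <;> linarith
  refine ⟨hS.1, ?_⟩
  rcases a_rows01 hA him1 him1n hQn with hQ0 | hQ1
  swap
  · exact hQ1
  exfalso
  have hQltn : Q < n := by
    rcases Nat.eq_or_lt_of_le hQn with h | h
    · exfalso
      have h2 := a_rowsN hA (show 1 ≤ i by omega) hin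
      rw [h] at hS0; rw [hS0] at h2; norm_num at h2
    · exact h
  have hp1 : b i (Q+1) = 1 :=
    pos_of_drop hA hd (by omega) hin (show q-1 ≤ Q by omega) hQltn hS1 hS0
  have hp2 : b (i-1) (Q+1) = 1 :=
    pos_of_drop hA hd him1 him1n hqQ hQltn hS.2 hQ0
  have f1 : aPS (aTr b) (Q+1) i = aPS (aTr b) (Q+1) (i-1) + b i (Q+1) := by
    have := aPS_succ (aTr b) (Q+1) (i-1)
    rwa [show i-1+1 = i by omega] at this
  have f2 : aPS (aTr b) (Q+1) (i-1) = aPS (aTr b) (Q+1) (i-2) + b (i-1) (Q+1) := by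
    have := aPS_succ (aTr b) (Q+1) (i-2)
    rwa [show i-2+1 = i-1 by omega] at this
  rw [hp1] at f1
  rw [hp2] at f2
  have g1 := a_rows01 hAt (show 1 ≤ Q+1 by omega) (show Q+1 ≤ n by omega) hin
  have g2 := a_rows01 hAt (show 1 ≤ Q+1 by omega) (show Q+1 ≤ n by omega) (show i-2 ≤ n by omega)
  rcases g1 with h | h <;> rcases g2 with h' | h' <;> linarith

lemma core_TL {n : ℕ} {b : ℕ → ℕ → ℝ} (hA : IsASM n b) (hd : IsDense b) {p P q Q : ℕ}
    (hp1 : 1 ≤ p) (hpP : p ≤ P) (hPn : P ≤ n) (hq1 : 1 ≤ q) (hqQ : q ≤ Q) (hQn : Q ≤ n) :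
    min (b p q) 0 ≤ ∑ i ∈ Icc p P, ∑ j ∈ Icc q Q, b i j := by
  set c := min (b p q) 0 with hc
  have hc0 : c ≤ 0 := min_le_right _ _
  have main : ∀ P', p ≤ P' → P' ≤ n →
      (c ≤ ∑ i ∈ Icc p P', (aPS b i Q - aPS b i (q-1)) ∧
      (aPS b P' Q - aPS b P' (q-1) = 1 →
        c + 1 ≤ ∑ i ∈ Icc p P', (aPS b i Q - aPS b i (q-1)))) := by
    intro P' hpP'
    induction P', hpP' using Nat.le_induction with
    | base =>
      intro hpn
      rw [Finset.Icc_self, Finset.sum_singleton]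
      rcases a_rows01 hA hp1 hpn (show q-1 ≤ n by omega) with h1 | h1 <;>
        rcases a_rows01 hA hp1 hpn hQn with h2 | h2
      · exact ⟨by rw [h1, h2]; linarith, fun h => by rw [h1, h2] at h; norm_num at h⟩
      · exact ⟨by rw [h1, h2]; linarith, fun _ => by rw [h1, h2]; linarith⟩
      · have hneg : b p q = -1 := by
          have := neg_of_drop hA hd (i := p) (w := q-1) (v := Q) hp1 hpn (by omega) hQn h1 h2
          rwa [show q-1+1 = q by omega] at this
        have hcm : c = -1 := by rw [hc, hneg]; norm_num
        exact ⟨by rw [h1, h2, hcm]; norm_num, fun h => by rw [h1, h2] at h; norm_num at h⟩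
      · exact ⟨by rw [h1, h2]; linarith, fun h => by rw [h1, h2] at h; norm_num at h⟩
    | succ P' hpP' ih =>
      intro hP'n
      have ihh := ih (by omega)
      rw [Finset.sum_Icc_succ_top (by omega : p ≤ P'+1)]
      rcases a_rows01 hA (show 1 ≤ P'+1 by omega) hP'n (show q-1 ≤ n by omega) with h1 | h1 <;>
        rcases a_rows01 hA (show 1 ≤ P'+1 by omega) hP'n hQn with h2 | h2
      · exact ⟨by rw [h1, h2]; linarith [ihh.1], fun h => by rw [h1, h2] at h; norm_num at h⟩
      · exact ⟨by rw [h1, h2]; linarith [ihh.1], fun _ => by rw [h1, h2]; linarith [ihh.1]⟩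
      · have hstep := step_pos hA hd (i := P'+1) (q := q) (Q := Q)
          (by omega) hP'n hq1 hqQ hQn h1 h2
        simp only [Nat.add_sub_cancel] at hstep
        have hprev := ihh.2 (by rw [hstep.1, hstep.2]; norm_num)
        exact ⟨by rw [h1, h2]; linarith, fun h => by rw [h1, h2] at h; norm_num at h⟩
      · exact ⟨by rw [h1, h2]; linarith [ihh.1], fun h => by rw [h1, h2] at h; norm_num at h⟩
  have hinner : ∀ i ∈ Icc p P, (∑ j ∈ Icc q Q, b i j) = aPS b i Q - aPS b i (q-1) :=
    fun i _ => sum_Icc_eq_aPS b i q Q hq1 (by omega)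
  rw [Finset.sum_congr rfl hinner]
  exact (main P hpP hPn).1

lemma core_TR {n : ℕ} {b : ℕ → ℕ → ℝ} (hA : IsASM n b) (hd : IsDense b) {p P q Q : ℕ}
    (hp1 : 1 ≤ p) (hpP : p ≤ P) (hPn : P ≤ n) (hq1 : 1 ≤ q) (hqQ : q ≤ Q) (hQn : Q ≤ n) :
    min (b p Q) 0 ≤ ∑ i ∈ Icc p P, ∑ j ∈ Icc q Q, b i j := by
  have h1 : ∀ i ∈ Icc p P, (∑ j ∈ Icc q Q, b i j)
      = ∑ j ∈ Icc (n+1-Q) (n+1-q), aCR n b i j := by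
    intro i _
    have e : ∀ j ∈ Icc q Q, b i j = aCR n b i (n+1-j) := by
      intro j hj; rw [Finset.mem_Icc] at hj
      show b i j = b i (n+1-(n+1-j)); congr 1; omega
    rw [Finset.sum_congr rfl e, sum_reflect (aCR n b i) q Q n hQn]
  have h2 : aCR n b p (n+1-Q) = b p Q := by
    show b p (n+1-(n+1-Q)) = b p Q; congr 1; omega
  rw [Finset.sum_congr rfl h1, ← h2]
  exact core_TL (isASM_aCR hA) (isDense_aCR hA hd) hp1 hpP hPn
    (by omega) (by omega) (by omega)

lemma sum_rows_reflect {n : ℕ} (b : ℕ → ℕ → ℝ) {p P q Q : ℕ} (hPn : P ≤ n) :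
    ∑ i ∈ Icc p P, ∑ j ∈ Icc q Q, b i j
      = ∑ i ∈ Icc (n+1-P) (n+1-p), ∑ j ∈ Icc q Q, aRR n b i j := by
  have e : ∀ i ∈ Icc p P, (∑ j ∈ Icc q Q, b i j)
      = (fun i' => ∑ j ∈ Icc q Q, aRR n b i' j) (n+1-i) := by
    intro i hi; rw [Finset.mem_Icc] at hi
    apply Finset.sum_congr rfl; intro j _
    show b i j = b (n+1-(n+1-i)) j
    congr 1; omega
  rw [Finset.sum_congr rfl e]
  exact sum_reflect (fun i' => ∑ j ∈ Icc q Q, aRR n b i' j) p P n hPn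

lemma core_BL {n : ℕ} {b : ℕ → ℕ → ℝ} (hA : IsASM n b) (hd : IsDense b) {p P q Q : ℕ}
    (hp1 : 1 ≤ p) (hpP : p ≤ P) (hPn : P ≤ n) (hq1 : 1 ≤ q) (hqQ : q ≤ Q) (hQn : Q ≤ n) :
    min (b P q) 0 ≤ ∑ i ∈ Icc p P, ∑ j ∈ Icc q Q, b i j := by
  rw [sum_rows_reflect b hPn]
  have h2 : aRR n b (n+1-P) q = b P q := by
    show b (n+1-(n+1-P)) q = b P q; congr 1; omega
  rw [← h2]
  exact core_TL (isASM_aRR hA) (isDense_aRR hA hd) (by omega) (by omega) (by omega) hq1 hqQ hQn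

lemma core_BR {n : ℕ} {b : ℕ → ℕ → ℝ} (hA : IsASM n b) (hd : IsDense b) {p P q Q : ℕ}
    (hp1 : 1 ≤ p) (hpP : p ≤ P) (hPn : P ≤ n) (hq1 : 1 ≤ q) (hqQ : q ≤ Q) (hQn : Q ≤ n) :
    min (b P Q) 0 ≤ ∑ i ∈ Icc p P, ∑ j ∈ Icc q Q, b i j := by
  rw [sum_rows_reflect b hPn]
  have h2 : aRR n b (n+1-P) Q = b P Q := by
    show b (n+1-(n+1-P)) Q = b P Q; congr 1; omega
  rw [← h2]
  exact core_TR (isASM_aRR hA) (isDense_aRR hA hd) (by omega) (by omega) (by omega) hq1 hqQ hQn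

lemma vol_Qmat (a : ℕ → ℕ → ℝ) {r r' s s' : ℕ} (h1 : r ≤ r') (h2 : s ≤ s') :
    vol (Qmat a) r r' s s' = ∑ i ∈ Icc (r+1) r', ∑ j ∈ Icc (s+1) s', a i j := by
  have hQ : ∀ x y : ℕ, Qmat a x y = ∑ i ∈ Ioc 0 x, aPS a i y := by
    intro x y; simp only [Qmat, aPS]
    apply Finset.sum_congr ?_ (fun _ _ => rfl)
    ext z; simp only [mem_Icc, mem_Ioc]; omega
  have hr : ∀ y : ℕ, (∑ i ∈ Ioc 0 r, aPS a i y) + ∑ i ∈ Ioc r r', aPS a i y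
      = ∑ i ∈ Ioc 0 r', aPS a i y :=
    fun y => Finset.sum_Ioc_consecutive _ (Nat.zero_le r) h1
  have hinner : ∀ i, aPS a i s' - aPS a i s = ∑ j ∈ Icc (s+1) s', a i j := by
    intro i
    rw [sum_Icc_eq_aPS a i (s+1) s' (by omega) (by omega)]
    rw [show s+1-1 = s by omega]
  have hIcc : Icc (r+1) r' = Ioc r r' := by ext z; simp only [mem_Icc, mem_Ioc]; omega
  have key : ∑ i ∈ Ioc r r', (aPS a i s' - aPS a i s)
      = ∑ i ∈ Ioc r r', ∑ j ∈ Icc (s+1) s', a i j :=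
    Finset.sum_congr rfl (fun i _ => hinner i)
  rw [vol, hQ, hQ, hQ, hQ, ← hr s, ← hr s', hIcc, ← key, Finset.sum_sub_distrib]
  ring

lemma vol_unit (a : ℕ → ℕ → ℝ) (x y : ℕ) :
    vol (Qmat a) x (x+1) y (y+1) = a (x+1) (y+1) := by
  rw [vol_Qmat a (by omega) (by omega)]
  simp

lemma range_of_neg {n : ℕ} {a : ℕ → ℕ → ℝ} (hA : IsASM n a) {i j : ℕ}
    (h : a i j = -1) : 1 ≤ i ∧ i ≤ n ∧ 1 ≤ j ∧ j ≤ n := by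
  by_contra hc
  rw [hA.1 i j hc] at h; norm_num at h

/-- For a proper dense ASM `A` and `Q = Q(A)`, writing
`a⁻_{ij} = min{a_{ij},0}` (zero outside `{1,…,n}²`), the defect matrices are
`D_↘^Q(r,s) = a⁻_{r+1,s+1}`, `D_↙^Q(r,s) = a⁻_{r+1,s}`, `D_↖^Q(r,s) = a⁻_{r,s}`,
`D_↗^Q(r,s) = a⁻_{r,s+1}`, `D_M^Q(r,s) = min{a⁻_{r,s}, a⁻_{r+1,s+1}}`, and
`D_O^Q(r,s) = min{a⁻_{r+1,s}, a⁻_{r,s+1}}` for all `r,s ∈ {1,…,n}`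
(equivalently, in matrix form, `D_↘^Q = J_n A⁻ J_nᵀ`, `D_↙^Q = J_n A⁻`, `D_↖^Q = A⁻`,
`D_↗^Q = A⁻ J_nᵀ`, `D_M^Q = A⁻ ∧ J_n A⁻ J_nᵀ`, `D_O^Q = J_n A⁻ ∧ A⁻ J_nᵀ`). -/
theorem dense_ASM_defects_eq_negPart (n : ℕ) (a : ℕ → ℕ → ℝ)
    (hA : IsASM n a) (hdense : IsDense a) (hproper : IsProper a) :
    ∀ r s, 1 ≤ r → r ≤ n → 1 ≤ s → s ≤ n →
      Dse n (Qmat a) r s = min (a (r+1) (s+1)) 0 ∧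
      Dsw n (Qmat a) r s = min (a (r+1) s) 0 ∧
      Dnw n (Qmat a) r s = min (a r s) 0 ∧
      Dne n (Qmat a) r s = min (a r (s+1)) 0 ∧
      DM n (Qmat a) r s = min (min (a r s) 0) (min (a (r+1) (s+1)) 0) ∧
      DO n (Qmat a) r s = min (min (a (r+1) s) 0) (min (a r (s+1)) 0) := by
  intro r s hr1 hrn hs1 hsn
  have hval := hA.2.1
  have hDse : Dse n (Qmat a) r s = min (a (r+1) (s+1)) 0 := by
    apply le_antisymm
    · rcases hval (r+1) (s+1) with h | h | h
      · have hin := range_of_neg hA h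
        rw [Dse, Finset.fold_min_le]
        right
        refine ⟨(r+1, s+1), ?_, ?_⟩
        · rw [Finset.mem_product, Finset.mem_Icc, Finset.mem_Icc]; omega
        · rw [vol_unit, h]; norm_num
      · rw [Dse, Finset.fold_min_le]; left; rw [h]; norm_num
      · rw [Dse, Finset.fold_min_le]; left; rw [h]; norm_num
    · rw [Dse, Finset.le_fold_min]
      refine ⟨min_le_right _ _, ?_⟩
      rintro ⟨x, y⟩ hxy
      rw [Finset.mem_product, Finset.mem_Icc, Finset.mem_Icc] at hxy
      rw [vol_Qmat a (by omega : r ≤ x) (by omega : s ≤ y)]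
      exact core_TL hA hdense (by omega) (by omega) (by omega) (by omega) (by omega) (by omega)
  have hDsw : Dsw n (Qmat a) r s = min (a (r+1) s) 0 := by
    apply le_antisymm
    · rcases hval (r+1) s with h | h | h
      · have hin := range_of_neg hA h
        rw [Dsw, Finset.fold_min_le]
        right
        refine ⟨(r+1, s-1), ?_, ?_⟩
        · rw [Finset.mem_product, Finset.mem_Icc, Finset.mem_range]; omega
        · have hv := vol_unit a r (s-1)
          rw [show s-1+1 = s by omega] at hv
          show vol (Qmat a) r (r+1) (s-1) s ≤ _
          rw [hv, h]; norm_num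
      · rw [Dsw, Finset.fold_min_le]; left; rw [h]; norm_num
      · rw [Dsw, Finset.fold_min_le]; left; rw [h]; norm_num
    · rw [Dsw, Finset.le_fold_min]
      refine ⟨min_le_right _ _, ?_⟩
      rintro ⟨x, y⟩ hxy
      rw [Finset.mem_product, Finset.mem_Icc, Finset.mem_range] at hxy
      show min (a (r+1) s) 0 ≤ vol (Qmat a) r x y s
      rw [vol_Qmat a (by omega : r ≤ x) (by omega : y ≤ s)]
      exact core_TR hA hdense (by omega) (by omega) (by omega) (by omega) (by omega) (by omega)
  have hDnw : Dnw n (Qmat a) r s = min (a r s) 0 := by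
    apply le_antisymm
    · rcases hval r s with h | h | h
      · rw [Dnw, Finset.fold_min_le]
        right
        refine ⟨(r-1, s-1), ?_, ?_⟩
        · rw [Finset.mem_product, Finset.mem_range, Finset.mem_range]; omega
        · have hv := vol_unit a (r-1) (s-1)
          rw [show r-1+1 = r by omega, show s-1+1 = s by omega] at hv
          show vol (Qmat a) (r-1) r (s-1) s ≤ _
          rw [hv, h]; norm_num
      · rw [Dnw, Finset.fold_min_le]; left; rw [h]; norm_num
      · rw [Dnw, Finset.fold_min_le]; left; rw [h]; norm_num
    · rw [Dnw, Finset.le_fold_min]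
      refine ⟨min_le_right _ _, ?_⟩
      rintro ⟨x, y⟩ hxy
      rw [Finset.mem_product, Finset.mem_range, Finset.mem_range] at hxy
      show min (a r s) 0 ≤ vol (Qmat a) x r y s
      rw [vol_Qmat a (by omega : x ≤ r) (by omega : y ≤ s)]
      exact core_BR hA hdense (by omega) (by omega) (by omega) (by omega) (by omega) (by omega)
  have hDne : Dne n (Qmat a) r s = min (a r (s+1)) 0 := by
    apply le_antisymm
    · rcases hval r (s+1) with h | h | h
      · have hin := range_of_neg hA h
        rw [Dne, Finset.fold_min_le]
        right
        refine ⟨(r-1, s+1), ?_, ?_⟩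
        · rw [Finset.mem_product, Finset.mem_range, Finset.mem_Icc]; omega
        · have hv := vol_unit a (r-1) s
          rw [show r-1+1 = r by omega] at hv
          show vol (Qmat a) (r-1) r s (s+1) ≤ _
          rw [hv, h]; norm_num
      · rw [Dne, Finset.fold_min_le]; left; rw [h]; norm_num
      · rw [Dne, Finset.fold_min_le]; left; rw [h]; norm_num
    · rw [Dne, Finset.le_fold_min]
      refine ⟨min_le_right _ _, ?_⟩
      rintro ⟨x, y⟩ hxy
      rw [Finset.mem_product, Finset.mem_range, Finset.mem_Icc] at hxy
      show min (a r (s+1)) 0 ≤ vol (Qmat a) x r s y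
      rw [vol_Qmat a (by omega : x ≤ r) (by omega : s ≤ y)]
      exact core_BL hA hdense (by omega) (by omega) (by omega) (by omega) (by omega) (by omega)
  refine ⟨hDse, hDsw, hDnw, hDne, ?_, ?_⟩
  · rw [DM, hDse, hDnw, min_comm]
  · rw [DO, hDsw, hDne]
end

section
/- For every n ≥ 4 and 3 ≤ k ≤ n−1, the pair (Q(F_n^k), Q(F_n^{k−1})) is a self-dual imprecise copula: it is an imprecise copula and satisfies Q(F_n^k)_M = Q(F_n^{k−1}) and Q(F_n^{k−1})_O = Q(F_n^k). -/
open Finset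
set_option maxHeartbeats 4000000

/-! ### Auxiliary machinery for `QFk_selfDual` -/

/-- Closed form for `Q(F_n^k)`. -/
def gZ (n k r s : ℕ) : ℤ :=
  min (r:ℤ) (min s (max 0 (max ((r:ℤ)+s-n) (((r:ℤ)+s-k+1)/2))))

/-- Condition under which `Q(F_n^k) - Q(F_n^{k-1}) = -1` at `(r,s)`. -/
def QFCond (n k r s : ℕ) : Prop :=
  (r+s) % 2 = k % 2 ∧ k ≤ r+s ∧ r+s ≤ 2*n-k ∧ (r:ℤ) ≤ (s:ℤ)+(k:ℤ)-2 ∧ (s:ℤ) ≤ (r:ℤ)+(k:ℤ)-2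

/-- Complete linear characterization of `gZ`. -/
lemma QF_spec (n k r s : ℕ) (hr : r ≤ n) (hs : s ≤ n) :
    0 ≤ gZ n k r s ∧ (r:ℤ)+s-n ≤ gZ n k r s ∧ gZ n k r s ≤ r ∧ gZ n k r s ≤ s ∧
    (gZ n k r s ≤ 0 ∨ gZ n k r s ≤ (r:ℤ)+s-n ∨ 2*gZ n k r s ≤ (r:ℤ)+s-k+1) ∧
    ((r:ℤ) ≤ gZ n k r s ∨ (s:ℤ) ≤ gZ n k r s ∨ (r:ℤ)+s-k ≤ 2*gZ n k r s) := by
  simp only [gZ]; omega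

lemma QF_gZ_left0 (n k s : ℕ) : gZ n k 0 s = 0 := by simp only [gZ]; omega

lemma QF_gZ_right0 (n k r : ℕ) : gZ n k r 0 = 0 := by simp only [gZ]; omega

lemma QF_gZ_bdryA (n k i : ℕ) (hi : i ≤ n) : gZ n k i n = i := by simp only [gZ]; omega

lemma QF_gZ_bdryB (n k i : ℕ) (hi : i ≤ n) : gZ n k n i = i := by simp only [gZ]; omega

lemma QF_d_iff (n k r s : ℕ) (hk : 3 ≤ k) (hkn : k+1 ≤ n) (hr : r ≤ n) (hs : s ≤ n) :
    (gZ n k r s - gZ n (k-1) r s = -1 ↔ QFCond n k r s) ∧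
    0 ≤ gZ n (k-1) r s - gZ n k r s ∧ gZ n (k-1) r s - gZ n k r s ≤ 1 := by
  have h1 := QF_spec n k r s hr hs
  have h2 := QF_spec n (k-1) r s hr hs
  simp only [QFCond]; omega

lemma QF_t1 (n k i j a b : ℕ) (hk : 3 ≤ k) (hkn : k+1 ≤ n) (hij : i ≤ j) (hj : j ≤ n)
    (hab : a ≤ b) (hb : b ≤ n) :
    0 ≤ gZ n (k-1) i a + gZ n k j b - gZ n k i b - gZ n k j a := by
  have h1 := QF_spec n (k-1) i a (hij.trans hj) (hab.trans hb)
  have h2 := QF_spec n k j b hj hb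
  have h3 := QF_spec n k i b (hij.trans hj) hb
  have h4 := QF_spec n k j a hj (hab.trans hb)
  omega

lemma QF_t2 (n k i j a b : ℕ) (hk : 3 ≤ k) (hkn : k+1 ≤ n) (hij : i ≤ j) (hj : j ≤ n)
    (hab : a ≤ b) (hb : b ≤ n) :
    0 ≤ gZ n k i a + gZ n (k-1) j b - gZ n k i b - gZ n k j a := by
  have h1 := QF_spec n k i a (hij.trans hj) (hab.trans hb)
  have h2 := QF_spec n (k-1) j b hj hb
  have h3 := QF_spec n k i b (hij.trans hj) hb
  have h4 := QF_spec n k j a hj (hab.trans hb)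
  omega

lemma QF_t3 (n k i j a b : ℕ) (hk : 3 ≤ k) (hkn : k+1 ≤ n) (hij : i ≤ j) (hj : j ≤ n)
    (hab : a ≤ b) (hb : b ≤ n) :
    0 ≤ gZ n (k-1) i a + gZ n (k-1) j b - gZ n (k-1) i b - gZ n k j a := by
  have h1 := QF_spec n (k-1) i a (hij.trans hj) (hab.trans hb)
  have h2 := QF_spec n (k-1) j b hj hb
  have h3 := QF_spec n (k-1) i b (hij.trans hj) hb
  have h4 := QF_spec n k j a hj (hab.trans hb)
  omega

lemma QF_t4 (n k i j a b : ℕ) (hk : 3 ≤ k) (hkn : k+1 ≤ n) (hij : i ≤ j) (hj : j ≤ n)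
    (hab : a ≤ b) (hb : b ≤ n) :
    0 ≤ gZ n (k-1) i a + gZ n (k-1) j b - gZ n k i b - gZ n (k-1) j a := by
  have h1 := QF_spec n (k-1) i a (hij.trans hj) (hab.trans hb)
  have h2 := QF_spec n (k-1) j b hj hb
  have h3 := QF_spec n k i b (hij.trans hj) hb
  have h4 := QF_spec n (k-1) j a hj (hab.trans hb)
  omega

lemma QF_wit_NW (n k r s : ℕ) (hk : 3 ≤ k) (hkn : k+1 ≤ n) (hr : r ≤ n) (hs : s ≤ n)
    (hC : QFCond n k r s) (h2 : r + s = 2*n - k) :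
    1 ≤ r ∧ 1 ≤ s ∧
      gZ n k (r-1) (s-1) + gZ n k r s - gZ n k (r-1) s - gZ n k r (s-1) = -1 := by
  simp only [QFCond] at hC
  have hr1 : 1 ≤ r := by omega
  have hs1 : 1 ≤ s := by omega
  have w1 : gZ n k r s = (r:ℤ) + s - n := by simp only [gZ]; omega
  have w2 : gZ n k (r-1) s = (r:ℤ) + s - n := by simp only [gZ]; omega
  have w3 : gZ n k r (s-1) = (r:ℤ) + s - n := by simp only [gZ]; omega
  have w4 : gZ n k (r-1) (s-1) = (r:ℤ) + s - n - 1 := by simp only [gZ]; omega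
  omega
lemma QF_wit_SE (n k r s : ℕ) (hk : 3 ≤ k) (hkn : k+1 ≤ n) (hr : r ≤ n) (hs : s ≤ n)
    (hC : QFCond n k r s) (h2 : r + s ≠ 2*n - k) :
    r+1 ≤ n ∧ s+1 ≤ n ∧
      gZ n k r s + gZ n k (r+1) (s+1) - gZ n k r (s+1) - gZ n k (r+1) s = -1 := by
  simp only [QFCond] at hC
  have hr' : r + 1 ≤ n := by omega
  have hs' : s + 1 ≤ n := by omega
  have w1 : 2 * gZ n k r s = (r:ℤ) + s - k := by simp only [gZ]; omega
  have w2 : 2 * gZ n k (r+1) (s+1) = (r:ℤ) + s - k + 2 := by simp only [gZ]; omega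
  have w3 : 2 * gZ n k r (s+1) = (r:ℤ) + s - k + 2 := by simp only [gZ]; omega
  have w4 : 2 * gZ n k (r+1) s = (r:ℤ) + s - k + 2 := by simp only [gZ]; omega
  omega
lemma QF_wit_NE (n k r s : ℕ) (hk : 3 ≤ k) (hkn : k+1 ≤ n) (hr : r ≤ n) (hs : s ≤ n)
    (hC : QFCond n k r s) (h2 : (r:ℤ) = (s:ℤ) + k - 2) :
    1 ≤ r ∧ s+1 ≤ n ∧
      gZ n (k-1) (r-1) s + gZ n (k-1) r (s+1) - gZ n (k-1) (r-1) (s+1) - gZ n (k-1) r s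
        = -1 := by
  simp only [QFCond] at hC
  have hr1 : 1 ≤ r := by omega
  have hs' : s + 1 ≤ n := by omega
  have w1 : 2 * gZ n (k-1) r s = (r:ℤ) + s - k + 2 := by simp only [gZ]; omega
  have w2 : 2 * gZ n (k-1) (r-1) s = (r:ℤ) + s - k := by simp only [gZ]; omega
  have w3 : 2 * gZ n (k-1) r (s+1) = (r:ℤ) + s - k + 2 := by simp only [gZ]; omega
  have w4 : 2 * gZ n (k-1) (r-1) (s+1) = (r:ℤ) + s - k + 2 := by simp only [gZ]; omega
  omega
lemma QF_wit_SW (n k r s : ℕ) (hk : 3 ≤ k) (hkn : k+1 ≤ n) (hr : r ≤ n) (hs : s ≤ n)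
    (hC : QFCond n k r s) (h2 : (r:ℤ) ≠ (s:ℤ) + k - 2) :
    r+1 ≤ n ∧ 1 ≤ s ∧
      gZ n (k-1) r (s-1) + gZ n (k-1) (r+1) s - gZ n (k-1) r s - gZ n (k-1) (r+1) (s-1)
        = -1 := by
  simp only [QFCond] at hC
  have hr' : r + 1 ≤ n := by omega
  have hs1 : 1 ≤ s := by omega
  have w1 : 2 * gZ n (k-1) r s = (r:ℤ) + s - k + 2 := by simp only [gZ]; omega
  have w2 : 2 * gZ n (k-1) r (s-1) = (r:ℤ) + s - k := by simp only [gZ]; omega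
  have w3 : 2 * gZ n (k-1) (r+1) s = (r:ℤ) + s - k + 2 := by simp only [gZ]; omega
  have w4 : 2 * gZ n (k-1) (r+1) (s-1) = (r:ℤ) + s - k + 2 := by simp only [gZ]; omega
  omega
lemma QF_Qmat_row (a : ℕ → ℕ → ℝ) (r s : ℕ) :
    Qmat a (r+1) s = Qmat a r s + ∑ j ∈ Icc 1 s, a (r+1) j := by
  simp only [Qmat]
  rw [Finset.sum_Icc_succ_top (by omega : 1 ≤ r + 1)]

lemma QF_Qmat_rec (a : ℕ → ℕ → ℝ) (r s : ℕ) :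
    Qmat a (r+1) (s+1) = Qmat a r (s+1) + Qmat a (r+1) s - Qmat a r s + a (r+1) (s+1) := by
  have h1 := QF_Qmat_row a r (s+1)
  have h2 := QF_Qmat_row a r s
  have h3 : ∑ j ∈ Icc 1 (s+1), a (r+1) j
      = (∑ j ∈ Icc 1 s, a (r+1) j) + a (r+1) (s+1) :=
    Finset.sum_Icc_succ_top (by omega) _
  rw [h1, h3, h2]; ring

lemma QF_entry (n k : ℕ) (hk : 2 ≤ k) (hkn : k+1 ≤ n) (r s : ℕ)
    (hr1 : 1 ≤ r) (hr : r ≤ n) (hs1 : 1 ≤ s) (hs : s ≤ n) :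
    Fmat n k r s
      = ((gZ n k r s - gZ n k (r-1) s - gZ n k r (s-1) + gZ n k (r-1) (s-1) : ℤ) : ℝ) := by
  have h1 := QF_spec n k r s hr hs
  have h2 := QF_spec n k (r-1) s (by omega) hs
  have h3 := QF_spec n k r (s-1) hr (by omega)
  have h4 := QF_spec n k (r-1) (s-1) (by omega) (by omega)
  simp only [Fmat]
  split_ifs with hb
  · obtain ⟨hb1, hb2, hb3⟩ := hb
    rw [abs_le] at hb3
    rcases Nat.even_or_odd (r + s - k - 1) with he | ho
    · rw [he.neg_one_pow]
      obtain ⟨m, hm⟩ := he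
      have hv : (gZ n k r s - gZ n k (r-1) s - gZ n k r (s-1) + gZ n k (r-1) (s-1) : ℤ)
          = 1 := by omega
      rw [hv]; norm_num
    · rw [ho.neg_one_pow]
      obtain ⟨m, hm⟩ := ho
      have hv : (gZ n k r s - gZ n k (r-1) s - gZ n k r (s-1) + gZ n k (r-1) (s-1) : ℤ)
          = -1 := by omega
      rw [hv]; norm_num
  · rw [abs_le] at hb
    have hv : (gZ n k r s - gZ n k (r-1) s - gZ n k r (s-1) + gZ n k (r-1) (s-1) : ℤ)
        = 0 := by omega
    rw [hv]; norm_num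

lemma QF_qeq (n k : ℕ) (hk : 2 ≤ k) (hkn : k+1 ≤ n) :
    ∀ r, r ≤ n → ∀ s, s ≤ n → Qmat (Fmat n k) r s = ((gZ n k r s : ℤ) : ℝ) := by
  intro r
  induction r with
  | zero =>
    intro _ s _
    have h0 : gZ n k 0 s = 0 := QF_gZ_left0 n k s
    simp only [Qmat]
    rw [show Icc 1 0 = (∅ : Finset ℕ) from Finset.Icc_eq_empty_of_lt (by omega)]
    simp [h0]
  | succ r ih =>
    intro hr s
    induction s with
    | zero =>
      intro _
      have h0 : gZ n k (r+1) 0 = 0 := QF_gZ_right0 n k (r+1)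
      simp only [Qmat]
      rw [show Icc 1 0 = (∅ : Finset ℕ) from Finset.Icc_eq_empty_of_lt (by omega)]
      simp [h0]
    | succ s ihs =>
      intro hs
      have e1 := ih (by omega) (s+1) hs
      have e2 := ih (by omega) s (by omega)
      have e3 := ihs (by omega)
      rw [QF_Qmat_rec, e1, e2, e3,
        QF_entry n k hk hkn (r+1) (s+1) (by omega) hr (by omega) hs]
      simp only [Nat.add_sub_cancel]
      push_cast
      ring

/-- For every `n ≥ 4` and `3 ≤ k ≤ n−1`, the pair
`(Q(F_n^k), Q(F_n^{k−1}))` is a self-dual imprecise copula. -/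
theorem QFk_selfDual (n k : ℕ) (hn : 4 ≤ n) (hk1 : 3 ≤ k) (hk2 : k ≤ n - 1) :
    SelfDual n (Qmat (Fmat n k)) (Qmat (Fmat n (k - 1))) := by
  have hkn : k + 1 ≤ n := by omega
  have qP := QF_qeq n k (by omega) hkn
  have qQ := QF_qeq n (k-1) (by omega) (by omega)
  have hbP : DiscBoundary n (Qmat (Fmat n k)) := by
    intro i hi
    refine ⟨?_, ?_, ?_, ?_⟩
    · rw [qP i hi 0 (Nat.zero_le n), QF_gZ_right0]; norm_num
    · rw [qP 0 (Nat.zero_le n) i hi, QF_gZ_left0]; norm_num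
    · rw [qP i hi n le_rfl, QF_gZ_bdryA n k i hi]; norm_cast
    · rw [qP n le_rfl i hi, QF_gZ_bdryB n k i hi]; norm_cast
  have hbQ : DiscBoundary n (Qmat (Fmat n (k-1))) := by
    intro i hi
    refine ⟨?_, ?_, ?_, ?_⟩
    · rw [qQ i hi 0 (Nat.zero_le n), QF_gZ_right0]; norm_num
    · rw [qQ 0 (Nat.zero_le n) i hi, QF_gZ_left0]; norm_num
    · rw [qQ i hi n le_rfl, QF_gZ_bdryA n (k-1) i hi]; norm_cast
    · rw [qQ n le_rfl i hi, QF_gZ_bdryB n (k-1) i hi]; norm_cast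
  refine ⟨⟨hbP, hbQ, ?_⟩, ?_, ?_⟩
  · -- the four imprecise-copula inequalities
    intro i j a b hij hj hab hb
    have hi : i ≤ n := hij.trans hj
    have ha : a ≤ n := hab.trans hb
    refine ⟨?_, ?_, ?_, ?_⟩
    · rw [qQ i hi a ha, qP j hj b hb, qP i hi b hb, qP j hj a ha]
      exact_mod_cast QF_t1 n k i j a b hk1 hkn hij hj hab hb
    · rw [qP i hi a ha, qQ j hj b hb, qP i hi b hb, qP j hj a ha]
      exact_mod_cast QF_t2 n k i j a b hk1 hkn hij hj hab hb
    · rw [qQ i hi a ha, qQ j hj b hb, qQ i hi b hb, qP j hj a ha]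
      exact_mod_cast QF_t3 n k i j a b hk1 hkn hij hj hab hb
    · rw [qQ i hi a ha, qQ j hj b hb, qP i hi b hb, qQ j hj a ha]
      exact_mod_cast QF_t4 n k i j a b hk1 hkn hij hj hab hb
  · -- P_M = Q
    intro r hr s hs
    have hdi := QF_d_iff n k r s hk1 hkn hr hs
    have hse : ((gZ n k r s - gZ n (k-1) r s : ℤ) : ℝ)
        ≤ Dse n (Qmat (Fmat n k)) r s := by
      simp only [Dse]
      rw [Finset.le_fold_min]
      refine ⟨?_, ?_⟩
      · exact_mod_cast (show (gZ n k r s - gZ n (k-1) r s : ℤ) ≤ 0 by omega)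
      · intro p hp
        simp only [Finset.mem_product, Finset.mem_Icc] at hp
        simp only [vol]
        rw [qP r hr s hs, qP p.1 (by omega) p.2 (by omega), qP r hr p.2 (by omega),
          qP p.1 (by omega) s hs]
        have ht := QF_t1 n k r p.1 s p.2 hk1 hkn (by omega) (by omega) (by omega) (by omega)
        exact_mod_cast (show (gZ n k r s - gZ n (k-1) r s : ℤ)
          ≤ gZ n k r s + gZ n k p.1 p.2 - gZ n k r p.2 - gZ n k p.1 s by omega)
    have hnw : ((gZ n k r s - gZ n (k-1) r s : ℤ) : ℝ)
        ≤ Dnw n (Qmat (Fmat n k)) r s := by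
      simp only [Dnw]
      rw [Finset.le_fold_min]
      refine ⟨?_, ?_⟩
      · exact_mod_cast (show (gZ n k r s - gZ n (k-1) r s : ℤ) ≤ 0 by omega)
      · intro p hp
        simp only [Finset.mem_product, Finset.mem_range] at hp
        simp only [vol]
        rw [qP p.1 (by omega) p.2 (by omega), qP r hr s hs, qP p.1 (by omega) s hs,
          qP r hr p.2 (by omega)]
        have ht := QF_t2 n k p.1 r p.2 s hk1 hkn (by omega) hr (by omega) hs
        exact_mod_cast (show (gZ n k r s - gZ n (k-1) r s : ℤ)
          ≤ gZ n k p.1 p.2 + gZ n k r s - gZ n k p.1 s - gZ n k r p.2 by omega)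
    have hub : DM n (Qmat (Fmat n k)) r s
        ≤ ((gZ n k r s - gZ n (k-1) r s : ℤ) : ℝ) := by
      simp only [DM]
      by_cases hC : QFCond n k r s
      · by_cases h2 : r + s = 2*n - k
        · obtain ⟨w1, w2, w3⟩ := QF_wit_NW n k r s hk1 hkn hr hs hC h2
          have hwit : vol (Qmat (Fmat n k)) (r-1) r (s-1) s
              ≤ ((gZ n k r s - gZ n (k-1) r s : ℤ) : ℝ) := by
            simp only [vol]
            rw [qP (r-1) (by omega) (s-1) (by omega), qP r hr s hs,
              qP (r-1) (by omega) s hs, qP r hr (s-1) (by omega)]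
            have hd := hdi.1.2 hC
            exact_mod_cast (show gZ n k (r-1) (s-1) + gZ n k r s - gZ n k (r-1) s
              - gZ n k r (s-1) ≤ gZ n k r s - gZ n (k-1) r s by omega)
          refine le_trans (min_le_right _ _) ?_
          simp only [Dnw]
          exact (Finset.fold_min_le _).mpr (Or.inr ⟨(r-1, s-1), by
            simp only [Finset.mem_product, Finset.mem_range]; omega, hwit⟩)
        · obtain ⟨w1, w2, w3⟩ := QF_wit_SE n k r s hk1 hkn hr hs hC h2
          have hwit : vol (Qmat (Fmat n k)) r (r+1) s (s+1)
              ≤ ((gZ n k r s - gZ n (k-1) r s : ℤ) : ℝ) := by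
            simp only [vol]
            rw [qP r hr s hs, qP (r+1) w1 (s+1) w2, qP r hr (s+1) w2, qP (r+1) w1 s hs]
            have hd := hdi.1.2 hC
            exact_mod_cast (show gZ n k r s + gZ n k (r+1) (s+1) - gZ n k r (s+1)
              - gZ n k (r+1) s ≤ gZ n k r s - gZ n (k-1) r s by omega)
          refine le_trans (min_le_left _ _) ?_
          simp only [Dse]
          exact (Finset.fold_min_le _).mpr (Or.inr ⟨(r+1, s+1), by
            simp only [Finset.mem_product, Finset.mem_Icc]; omega, hwit⟩)
      · have hd : gZ n k r s - gZ n (k-1) r s = 0 := by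
          have h4 : ¬ (gZ n k r s - gZ n (k-1) r s = -1) := fun hh => hC (hdi.1.1 hh)
          have h5 := hdi.2.1
          have h6 := hdi.2.2
          omega
        rw [hd]
        simp only [Int.cast_zero]
        refine le_trans (min_le_left _ _) ?_
        simp only [Dse]
        exact (Finset.fold_min_le _).mpr (Or.inl le_rfl)
    have hlb : ((gZ n k r s - gZ n (k-1) r s : ℤ) : ℝ)
        ≤ DM n (Qmat (Fmat n k)) r s := by
      simp only [DM]; exact le_min hse hnw
    have hDM := le_antisymm hub hlb
    rw [qP r hr s hs, qQ r hr s hs, hDM]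
    push_cast
    ring
  · -- Q_O = P
    intro r hr s hs
    have hdi := QF_d_iff n k r s hk1 hkn hr hs
    have hsw : ((gZ n k r s - gZ n (k-1) r s : ℤ) : ℝ)
        ≤ Dsw n (Qmat (Fmat n (k-1))) r s := by
      simp only [Dsw]
      rw [Finset.le_fold_min]
      refine ⟨?_, ?_⟩
      · exact_mod_cast (show (gZ n k r s - gZ n (k-1) r s : ℤ) ≤ 0 by omega)
      · intro p hp
        simp only [Finset.mem_product, Finset.mem_Icc, Finset.mem_range] at hp
        simp only [vol]
        rw [qQ r hr p.2 (by omega), qQ p.1 (by omega) s hs, qQ r hr s hs,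
          qQ p.1 (by omega) p.2 (by omega)]
        have ht := QF_t4 n k r p.1 p.2 s hk1 hkn (by omega) (by omega) (by omega) hs
        exact_mod_cast (show (gZ n k r s - gZ n (k-1) r s : ℤ)
          ≤ gZ n (k-1) r p.2 + gZ n (k-1) p.1 s - gZ n (k-1) r s
            - gZ n (k-1) p.1 p.2 by omega)
    have hne : ((gZ n k r s - gZ n (k-1) r s : ℤ) : ℝ)
        ≤ Dne n (Qmat (Fmat n (k-1))) r s := by
      simp only [Dne]
      rw [Finset.le_fold_min]
      refine ⟨?_, ?_⟩
      · exact_mod_cast (show (gZ n k r s - gZ n (k-1) r s : ℤ) ≤ 0 by omega)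
      · intro p hp
        simp only [Finset.mem_product, Finset.mem_Icc, Finset.mem_range] at hp
        simp only [vol]
        rw [qQ p.1 (by omega) s hs, qQ r hr p.2 (by omega),
          qQ p.1 (by omega) p.2 (by omega), qQ r hr s hs]
        have ht := QF_t3 n k p.1 r s p.2 hk1 hkn (by omega) hr (by omega) (by omega)
        exact_mod_cast (show (gZ n k r s - gZ n (k-1) r s : ℤ)
          ≤ gZ n (k-1) p.1 s + gZ n (k-1) r p.2 - gZ n (k-1) p.1 p.2
            - gZ n (k-1) r s by omega)
    have hub : DO n (Qmat (Fmat n (k-1))) r s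
        ≤ ((gZ n k r s - gZ n (k-1) r s : ℤ) : ℝ) := by
      simp only [DO]
      by_cases hC : QFCond n k r s
      · by_cases h2 : (r:ℤ) = (s:ℤ) + k - 2
        · obtain ⟨w1, w2, w3⟩ := QF_wit_NE n k r s hk1 hkn hr hs hC h2
          have hwit : vol (Qmat (Fmat n (k-1))) (r-1) r s (s+1)
              ≤ ((gZ n k r s - gZ n (k-1) r s : ℤ) : ℝ) := by
            simp only [vol]
            rw [qQ (r-1) (by omega) s hs, qQ r hr (s+1) w2,
              qQ (r-1) (by omega) (s+1) w2, qQ r hr s hs]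
            have hd := hdi.1.2 hC
            exact_mod_cast (show gZ n (k-1) (r-1) s + gZ n (k-1) r (s+1)
              - gZ n (k-1) (r-1) (s+1) - gZ n (k-1) r s
              ≤ gZ n k r s - gZ n (k-1) r s by omega)
          refine le_trans (min_le_right _ _) ?_
          simp only [Dne]
          exact (Finset.fold_min_le _).mpr (Or.inr ⟨(r-1, s+1), by
            simp only [Finset.mem_product, Finset.mem_range, Finset.mem_Icc]; omega, hwit⟩)
        · obtain ⟨w1, w2, w3⟩ := QF_wit_SW n k r s hk1 hkn hr hs hC h2
          have hwit : vol (Qmat (Fmat n (k-1))) r (r+1) (s-1) s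
              ≤ ((gZ n k r s - gZ n (k-1) r s : ℤ) : ℝ) := by
            simp only [vol]
            rw [qQ r hr (s-1) (by omega), qQ (r+1) w1 s hs, qQ r hr s hs,
              qQ (r+1) w1 (s-1) (by omega)]
            have hd := hdi.1.2 hC
            exact_mod_cast (show gZ n (k-1) r (s-1) + gZ n (k-1) (r+1) s
              - gZ n (k-1) r s - gZ n (k-1) (r+1) (s-1)
              ≤ gZ n k r s - gZ n (k-1) r s by omega)
          refine le_trans (min_le_left _ _) ?_
          simp only [Dsw]
          exact (Finset.fold_min_le _).mpr (Or.inr ⟨(r+1, s-1), by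
            simp only [Finset.mem_product, Finset.mem_Icc, Finset.mem_range]; omega, hwit⟩)
      · have hd : gZ n k r s - gZ n (k-1) r s = 0 := by
          have h4 : ¬ (gZ n k r s - gZ n (k-1) r s = -1) := fun hh => hC (hdi.1.1 hh)
          have h5 := hdi.2.1
          have h6 := hdi.2.2
          omega
        rw [hd]
        simp only [Int.cast_zero]
        refine le_trans (min_le_left _ _) ?_
        simp only [Dsw]
        exact (Finset.fold_min_le _).mpr (Or.inl le_rfl)
    have hlb : ((gZ n k r s - gZ n (k-1) r s : ℤ) : ℝ)
        ≤ DO n (Qmat (Fmat n (k-1))) r s := by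
      simp only [DO]; exact le_min hsw hne
    have hDO := le_antisymm hub hlb
    rw [qQ r hr s hs, qP r hr s hs, hDO]
    push_cast
    ring
end

section
/- For every n ≥ 4 and 3 ≤ k ≤ n−1, the imprecise copula (Q(F_n^k), Q(F_n^{k−1})) avoids sure loss; indeed the function C = ½(Q(F_n^k) + Q(F_n^{k−1})) is a discrete copula satisfying Q(F_n^k)(r,s) ≤ C(r,s) ≤ Q(F_n^{k−1})(r,s) for all (r,s) ∈ L_n × L_n. -/
open Finset

/-- Closed form for `Q(F_n^k)`. -/
def fN (n k r s : ℕ) : ℕ := max (r + s - n) (min r (min s ((r + s + 1 - k) / 2)))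

/-- Closed form for `Q(F_n^k) + Q(F_n^{k-1})`. -/
def fN2 (n k r s : ℕ) : ℕ :=
  max (2 * (r + s) - 2 * n) (min (2 * r) (min (2 * s) (r + s + 1 - k)))

/-- The partial row sums of `F_n^k` equal `1` exactly on this region. -/
def Pcond (n k i s : ℕ) : Prop :=
  1 ≤ s ∧ k + 1 ≤ i + s ∧ i + 1 ≤ s + k ∧
    ((i + s + k + 1) % 2 = 0 ∨ s ≥ n ∨ i + s ≥ 2 * n + 1 - k ∨ s + 1 ≥ i + k)

instance (n k i s : ℕ) : Decidable (Pcond n k i s) := by unfold Pcond; infer_instance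

lemma myNegOnePow (e : ℕ) : (-1 : ℝ) ^ e = if e % 2 = 0 then 1 else -1 := by
  rcases Nat.even_or_odd e with h | h
  · simp [h.neg_one_pow, Nat.even_iff.mp h]
  · simp [h.neg_one_pow, Nat.odd_iff.mp h]

set_option maxHeartbeats 1000000 in
lemma rowsum (n k : ℕ) (hk : 1 ≤ k) (hkn : k + 1 ≤ n) (i : ℕ) (hi1 : 1 ≤ i) (hin : i ≤ n) :
    ∀ s, s ≤ n → ∑ j ∈ Icc 1 s, Fmat n k i j = if Pcond n k i s then 1 else 0 := by
  intro s
  induction s with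
  | zero =>
    intro _
    rw [Finset.Icc_eq_empty (by omega : ¬(1 : ℕ) ≤ 0), Finset.sum_empty,
      if_neg (by unfold Pcond; omega)]
  | succ s ih =>
    intro hs
    rw [Finset.sum_Icc_succ_top (by omega : 1 ≤ s + 1), ih (by omega)]
    unfold Fmat
    simp only [abs_le, myNegOnePow]
    split_ifs <;> unfold Pcond at * <;> first | (exfalso; omega) | norm_num

set_option maxHeartbeats 1000000 in
lemma fN_step (n k r s : ℕ) (hk : 1 ≤ k) (hkn : k + 1 ≤ n) (hr : r + 1 ≤ n) (hs : s ≤ n) :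
    fN n k (r + 1) s = fN n k r s + (if Pcond n k (r + 1) s then 1 else 0) := by
  unfold fN
  split_ifs with h <;> unfold Pcond at h <;> omega

set_option maxHeartbeats 1000000 in
lemma Qmat_eq (n k : ℕ) (hk : 1 ≤ k) (hkn : k + 1 ≤ n) :
    ∀ r, r ≤ n → ∀ s, s ≤ n → Qmat (Fmat n k) r s = (fN n k r s : ℝ) := by
  intro r
  induction r with
  | zero =>
    intro _ s hs
    unfold Qmat
    rw [Finset.Icc_eq_empty (by omega : ¬(1 : ℕ) ≤ 0), Finset.sum_empty]
    have h0 : fN n k 0 s = 0 := by unfold fN; omega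
    rw [h0]; norm_num
  | succ r ih =>
    intro hr s hs
    unfold Qmat at ih ⊢
    rw [Finset.sum_Icc_succ_top (by omega : 1 ≤ r + 1), ih (by omega) s hs,
      rowsum n k hk hkn (r + 1) (by omega) hr s hs, fN_step n k r s hk hkn hr hs]
    split_ifs <;> push_cast <;> ring

set_option maxHeartbeats 1000000 in
lemma Fpair_nonneg (n k u v : ℕ) (hn : 4 ≤ n) (hk1 : 3 ≤ k) (hk2 : k ≤ n - 1) :
    0 ≤ Fmat n k u v + Fmat n (k - 1) u v := by
  unfold Fmat
  simp only [abs_le, myNegOnePow]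
  split_ifs <;> first | (exfalso; omega) | norm_num

lemma vol_sum (a : ℕ → ℕ → ℝ) (i j p q : ℕ) (h1 : i ≤ j) (h2 : p ≤ q) :
    Qmat a i p + Qmat a j q - Qmat a i q - Qmat a j p
      = ∑ u ∈ Ioc i j, ∑ v ∈ Ioc p q, a u v := by
  unfold Qmat
  have key : ∀ r s : ℕ, ∑ u ∈ Icc 1 r, ∑ v ∈ Icc 1 s, a u v
      = ∑ u ∈ Ioc 0 r, ∑ v ∈ Ioc 0 s, a u v := by
    intro r s
    rw [← Finset.Icc_add_one_left_eq_Ioc]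
    exact Finset.sum_congr rfl fun u _ => by rw [← Finset.Icc_add_one_left_eq_Ioc, zero_add]
  have h3 : ∀ s, ∑ u ∈ Ioc 0 j, ∑ v ∈ Ioc 0 s, a u v
      = (∑ u ∈ Ioc 0 i, ∑ v ∈ Ioc 0 s, a u v) + ∑ u ∈ Ioc i j, ∑ v ∈ Ioc 0 s, a u v :=
    fun s => (Finset.sum_Ioc_consecutive _ (Nat.zero_le i) h1).symm
  have hBB : (∑ u ∈ Ioc i j, ∑ v ∈ Ioc 0 q, a u v) - (∑ u ∈ Ioc i j, ∑ v ∈ Ioc 0 p, a u v)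
      = ∑ u ∈ Ioc i j, ∑ v ∈ Ioc p q, a u v := by
    rw [← Finset.sum_sub_distrib]
    refine Finset.sum_congr rfl fun u _ => ?_
    have := Finset.sum_Ioc_consecutive (fun v => a u v) (Nat.zero_le p) h2
    linarith
  rw [key, key, key, key, h3 q, h3 p]
  linarith [hBB]

lemma fN_sandwich (n k r s : ℕ) (hn : 4 ≤ n) (hk1 : 3 ≤ k) (hk2 : k ≤ n - 1)
    (hr : r ≤ n) (hs : s ≤ n) : fN n k r s ≤ fN n (k - 1) r s := by
  unfold fN; omega

set_option maxHeartbeats 1000000 in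
lemma fN2_eq (n k r s : ℕ) (hn : 4 ≤ n) (hk1 : 3 ≤ k) (hk2 : k ≤ n - 1)
    (hr : r ≤ n) (hs : s ≤ n) : fN n k r s + fN n (k - 1) r s = fN2 n k r s := by
  unfold fN fN2; omega

lemma fN2_b1 (n k i : ℕ) (hi : i ≤ n) : fN2 n k i 0 = 0 := by unfold fN2; omega
lemma fN2_b2 (n k i : ℕ) (hi : i ≤ n) : fN2 n k 0 i = 0 := by unfold fN2; omega
lemma fN2_b3 (n k i : ℕ) (hk1 : 3 ≤ k) (hi : i ≤ n) : fN2 n k i n = 2 * i := by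
  unfold fN2; omega
lemma fN2_b4 (n k i : ℕ) (hk1 : 3 ≤ k) (hi : i ≤ n) : fN2 n k n i = 2 * i := by
  unfold fN2; omega

lemma fN2_mono1 (n k i i' j : ℕ) (h : i ≤ i') : fN2 n k i j ≤ fN2 n k i' j := by
  unfold fN2; omega

lemma fN2_mono2 (n k i j j' : ℕ) (h : j ≤ j') : fN2 n k i j ≤ fN2 n k i j' := by
  unfold fN2; omega

set_option maxHeartbeats 1000000 in
lemma fN2_lip1 (n k i i' j : ℕ) (h : i ≤ i') :
    fN2 n k i' j ≤ fN2 n k i j + 2 * (i' - i) := by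
  unfold fN2; omega

set_option maxHeartbeats 1000000 in
lemma fN2_lip2 (n k i j j' : ℕ) (h : j ≤ j') :
    fN2 n k i j' ≤ fN2 n k i j + 2 * (j' - j) := by
  unfold fN2; omega

lemma abs_cast_of_le {a b : ℕ} (h : a ≤ b) : |(a : ℝ) - b| = ((b - a : ℕ) : ℝ) := by
  rw [abs_sub_comm, abs_of_nonneg (sub_nonneg.mpr (Nat.cast_le.mpr h)), Nat.cast_sub h]

lemma abs_half_le (a b c : ℕ) (h1 : a ≤ b) (h2 : b ≤ a + 2 * c) :
    |(a : ℝ) / 2 - (b : ℝ) / 2| ≤ (c : ℝ) := by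
  rw [← sub_div, abs_div, abs_two, abs_sub_comm,
    abs_of_nonneg (sub_nonneg.mpr (Nat.cast_le.mpr h1))]
  have hc : (b : ℝ) ≤ (a : ℝ) + 2 * c := by exact_mod_cast h2
  linarith

set_option maxHeartbeats 1000000 in
/-- For every `n ≥ 4` and `3 ≤ k ≤ n−1`, the imprecise copula
`(Q(F_n^k), Q(F_n^{k−1}))` avoids sure loss: `C = ½(Q(F_n^k)+Q(F_n^{k−1}))`
is a discrete copula with `Q(F_n^k) ≤ C ≤ Q(F_n^{k−1})` on `L_n × L_n`. -/
theorem QFk_avoids_sure_loss (n k : ℕ) (hn : 4 ≤ n) (hk1 : 3 ≤ k) (hk2 : k ≤ n - 1) :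
    DiscCopula n (fun r s => (Qmat (Fmat n k) r s + Qmat (Fmat n (k - 1)) r s) / 2) ∧
    ∀ r s, r ≤ n → s ≤ n →
      Qmat (Fmat n k) r s ≤ (Qmat (Fmat n k) r s + Qmat (Fmat n (k - 1)) r s) / 2 ∧
      (Qmat (Fmat n k) r s + Qmat (Fmat n (k - 1)) r s) / 2 ≤ Qmat (Fmat n (k - 1)) r s := by
  have hP := Qmat_eq n k (by omega) (by omega)
  have hQ := Qmat_eq n (k - 1) (by omega) (by omega)
  have hC : ∀ r, r ≤ n → ∀ s, s ≤ n →
      (Qmat (Fmat n k) r s + Qmat (Fmat n (k - 1)) r s) / 2 = (fN2 n k r s : ℝ) / 2 := by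
    intro r hr s hs
    rw [hP r hr s hs, hQ r hr s hs, ← fN2_eq n k r s hn hk1 hk2 hr hs]
    push_cast; ring
  refine ⟨⟨⟨?_, ?_, ?_, ?_⟩, ?_⟩, ?_⟩
  · -- boundary
    intro i hi
    refine ⟨?_, ?_, ?_, ?_⟩
    · simp only [hC i hi 0 (Nat.zero_le n)]
      rw [fN2_b1 n k i hi]; norm_num
    · simp only [hC 0 (Nat.zero_le n) i hi]
      rw [fN2_b2 n k i hi]; norm_num
    · simp only [hC i hi n le_rfl]
      rw [fN2_b3 n k i hk1 hi]; push_cast; ring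
    · simp only [hC n le_rfl i hi]
      rw [fN2_b4 n k i hk1 hi]; push_cast; ring
  · -- monotone in first argument
    intro i i' j h1 h2 h3
    simp only [hC i (le_trans h1 h2) j h3, hC i' h2 j h3]
    have := (Nat.cast_le (α := ℝ)).mpr (fN2_mono1 n k i i' j h1)
    linarith
  · -- monotone in second argument
    intro i j j' h1 h2 h3
    simp only [hC i h3 j (le_trans h1 h2), hC i h3 j' h2]
    have := (Nat.cast_le (α := ℝ)).mpr (fN2_mono2 n k i j j' h1)
    linarith
  · -- Lipschitz
    intro i i' j j' h1 h2 h3 h4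
    have e1 : |(Qmat (Fmat n k) i j + Qmat (Fmat n (k - 1)) i j) / 2 -
        (Qmat (Fmat n k) i' j + Qmat (Fmat n (k - 1)) i' j) / 2| ≤ |(i : ℝ) - i'| := by
      rw [hC i h1 j h3, hC i' h2 j h3]
      rcases le_total i i' with h | h
      · rw [abs_cast_of_le h]
        exact abs_half_le _ _ _ (fN2_mono1 n k i i' j h) (fN2_lip1 n k i i' j h)
      · rw [abs_sub_comm ((i : ℝ)) ((i' : ℝ)), abs_cast_of_le h,
          abs_sub_comm ((fN2 n k i j : ℝ) / 2)]
        exact abs_half_le _ _ _ (fN2_mono1 n k i' i j h) (fN2_lip1 n k i' i j h)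
    have e2 : |(Qmat (Fmat n k) i' j + Qmat (Fmat n (k - 1)) i' j) / 2 -
        (Qmat (Fmat n k) i' j' + Qmat (Fmat n (k - 1)) i' j') / 2| ≤ |(j : ℝ) - j'| := by
      rw [hC i' h2 j h3, hC i' h2 j' h4]
      rcases le_total j j' with h | h
      · rw [abs_cast_of_le h]
        exact abs_half_le _ _ _ (fN2_mono2 n k i' j j' h) (fN2_lip2 n k i' j j' h)
      · rw [abs_sub_comm ((j : ℝ)) ((j' : ℝ)), abs_cast_of_le h,
          abs_sub_comm ((fN2 n k i' j : ℝ) / 2)]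
        exact abs_half_le _ _ _ (fN2_mono2 n k i' j' j h) (fN2_lip2 n k i' j' j h)
    calc |(Qmat (Fmat n k) i j + Qmat (Fmat n (k - 1)) i j) / 2 -
          (Qmat (Fmat n k) i' j' + Qmat (Fmat n (k - 1)) i' j') / 2|
        ≤ _ := abs_sub_le _ ((Qmat (Fmat n k) i' j + Qmat (Fmat n (k - 1)) i' j) / 2) _
      _ ≤ |(i : ℝ) - i'| + |(j : ℝ) - j'| := add_le_add e1 e2
  · -- volumes nonnegative
    intro i j p q h1 h2 h3 h4
    unfold vol
    have e1 := vol_sum (Fmat n k) i j p q h1 h3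
    have e2 := vol_sum (Fmat n (k - 1)) i j p q h1 h3
    have hs : 0 ≤ ∑ u ∈ Ioc i j, ∑ v ∈ Ioc p q, (Fmat n k u v + Fmat n (k - 1) u v) :=
      Finset.sum_nonneg fun u _ => Finset.sum_nonneg fun v _ =>
        Fpair_nonneg n k u v hn hk1 hk2
    simp only [Finset.sum_add_distrib] at hs
    simp only []
    linarith
  · -- sandwich
    intro r s hr hs
    rw [hP r hr s hs, hQ r hr s hs]
    have hc := (Nat.cast_le (α := ℝ)).mpr (fN_sandwich n k r s hn hk1 hk2 hr hs)
    constructor <;> linarith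
end
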